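/- arXiv:1808.06085 — 11 statements merged into one kernel-verified Lean document; each statement's English description precedes it below -/
import Mathlib

section
/- Suppose G is a transitive permutation group on a finite set Ω and the stabiliser of a point has the weak k-et property. Then G has the weak k-et property. -/
open Finset

variable {Ω : Type*} [Fintype Ω] [DecidableEq Ω]

/-- `P` is a partition of the finite set `Ω`. -/
def IsPartition (P : Finset (Finset Ω)) : Prop :=
  (∀ p ∈ P, p.Nonempty) ∧
  (∀ p ∈ P, ∀ q ∈ P, p ≠ q → Disjoint p q) ∧
  (∀ x : Ω, ∃ p ∈ P, x ∈ p)

/-- `S` is a transversal of the partition `P`. -/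
def IsTransversal (S : Finset Ω) (P : Finset (Finset Ω)) : Prop :=
  ∀ p ∈ P, (S ∩ p).card = 1

/-- The `k`-set `S` witnesses the `k`-existential transversal property for `G`. -/
def Witnesses (G : Subgroup (Equiv.Perm Ω)) (k : ℕ) (S : Finset Ω) : Prop :=
  S.card = k ∧ ∀ P : Finset (Finset Ω), IsPartition P → P.card = k →
    ∃ g ∈ G, IsTransversal (S.image ⇑g) P

/-- If `G` is transitive and the stabiliser of the point `x` has the weak `k`-et
property (on `Ω \ {x}`), then `G` has the weak `k`-et property. -/
theorem weak_kET_of_stabilizer (G : Subgroup (Equiv.Perm Ω)) (k : ℕ)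
    (htrans : ∀ a b : Ω, ∃ g ∈ G, g a = b) (x : Ω)
    (hstab : ∃ S : Finset Ω, x ∉ S ∧ S.card = k ∧
      ∀ A : Finset Ω, x ∉ A → A.card = k - 1 →
        ∃ g ∈ G, g x = x ∧ A.image ⇑g ⊆ S) :
    ∃ S : Finset Ω, S.card = k ∧
      ∀ A : Finset Ω, A.card = k - 1 → ∃ g ∈ G, A.image ⇑g ⊆ S := by

  obtain ⟨S, hxS, hScard, hS⟩ := hstab
  refine ⟨S, hScard, fun A hA => ?_⟩
  by_cases hxA : x ∉ A
  · obtain ⟨g, hg, _, hsub⟩ := hS A hxA hA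
    exact ⟨g, hg, hsub⟩
  · push_neg at hxA
    -- find y ∉ A
    have hcard : A.card < Fintype.card Ω := by
      have : S.card ≤ Fintype.card Ω := S.card_le_univ
      have hk : k - 1 < k := by
        have : 1 ≤ A.card := Finset.card_pos.mpr ⟨x, hxA⟩
        omega
      omega
    obtain ⟨y, hy⟩ : ∃ y, y ∉ A := by
      by_contra h
      push_neg at h
      have : A = Finset.univ := Finset.eq_univ_iff_forall.mpr h
      simp [this] at hcard
    obtain ⟨g, hg, hgy⟩ := htrans y x
    have hxgA : x ∉ A.image ⇑g := by
      simp only [Finset.mem_image, not_exists]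
      rintro a ⟨ha, hax⟩
      have : a = y := g.injective (hax.trans hgy.symm)
      exact hy (this ▸ ha)
    have hcardg : (A.image ⇑g).card = k - 1 := by
      rw [Finset.card_image_of_injective _ g.injective, hA]
    obtain ⟨h, hh, _, hsub⟩ := hS _ hxgA hcardg
    refine ⟨h * g, G.mul_mem hh hg, ?_⟩
    intro z hz
    simp only [Finset.mem_image] at hz
    obtain ⟨a, ha, rfl⟩ := hz
    exact hsub (Finset.mem_image.mpr ⟨g a, Finset.mem_image.mpr ⟨a, ha, rfl⟩, rfl⟩)
end

section
/- Let G be an intransitive permutation group on an n-element set Ω with the k-et property, where 2 < k < n. Then G fixes a point of Ω and acts (k-1)-homogeneously on the remaining n-1 points. -/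
open Finset

variable {Ω : Type*} [Fintype Ω] [DecidableEq Ω]

/-!
Let `S` be a witnessing `k`-set. Every set `D` of fewer than `k` points lies in some image `g S`:
enlarge `D` to `k - 1` points and take `g S` transversal to the partition into the singletons of
`D` and the complement of `D`. Hence `S` meets every `G`-invariant set `U` in at least
`min |U| (k - 1)` points, and counting `S ∩ U` and `S ∩ Uᶜ` shows that `U` or `Uᶜ` has at most one
point. Applied to an orbit of the intransitive group this yields a fixed point `a`; then `a ∈ S`,
so every `(k - 1)`-set `B` avoiding `a` satisfies `g S = insert a B` for some `g ∈ G`, which gives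
`(k - 1)`-homogeneity on the other points.
-/

lemma IsTransversal.mem_of_singleton_mem {α : Type*} [DecidableEq α] {T : Finset α}
    {P : Finset (Finset α)} (hT : IsTransversal T P) {x : α} (hx : {x} ∈ P) : x ∈ T := by
  have h := hT _ hx
  by_contra hxT
  rw [inter_singleton_of_notMem hxT, card_empty] at h
  exact zero_ne_one h

lemma isPartition_insert_compl_image_singleton {D : Finset Ω} (hD : D ≠ univ) :
    IsPartition (insert Dᶜ (D.image singleton)) := by
  refine ⟨?_, ?_, fun x => ?_⟩
  · simp only [mem_insert, mem_image]
    rintro p (rfl | ⟨d, -, rfl⟩)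
    · exact (compl_ne_univ_iff_nonempty Dᶜ).mp (by rwa [compl_compl])
    · exact singleton_nonempty d
  · simp only [mem_insert, mem_image]
    rintro p (rfl | ⟨d, hd, rfl⟩) q (rfl | ⟨e, he, rfl⟩) hpq
    · exact absurd rfl hpq
    · exact disjoint_singleton_right.mpr (by simpa using he)
    · exact disjoint_singleton_left.mpr (by simpa using hd)
    · exact disjoint_singleton.mpr fun h => hpq (h ▸ rfl)
  · by_cases hx : x ∈ D
    · exact ⟨{x}, mem_insert_of_mem (mem_image_of_mem _ hx), mem_singleton_self x⟩
    · exact ⟨Dᶜ, mem_insert_self _ _, mem_compl.mpr hx⟩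

lemma card_insert_compl_image_singleton (D : Finset Ω) :
    (insert Dᶜ (D.image (singleton : Ω → Finset Ω))).card = D.card + 1 := by
  have hcompl : Dᶜ ∉ D.image singleton := by
    simp only [mem_image, not_exists, not_and]
    intro d hd hdD
    exact mem_compl.mp (hdD ▸ mem_singleton_self d) hd
  rw [card_insert_of_notMem hcompl, card_image_of_injective _ singleton_injective]

namespace Witnesses

variable {G : Subgroup (Equiv.Perm Ω)} {k : ℕ} {S : Finset Ω}

lemma exists_subset_image (hS : Witnesses G k S) (hkn : k ≤ Fintype.card Ω) {D : Finset Ω}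
    (hD : D.card < k) : ∃ g ∈ G, D ⊆ S.image g := by
  obtain ⟨E, hDE, hE⟩ := exists_superset_card_eq (s := D) (n := k - 1) (by omega) (by omega)
  have hEu : E ≠ univ := fun h => by rw [h, card_univ] at hE; omega
  obtain ⟨g, hg, hT⟩ := hS.2 _ (isPartition_insert_compl_image_singleton hEu)
    (by rw [card_insert_compl_image_singleton]; omega)
  exact ⟨g, hg, hDE.trans fun x hx =>
    hT.mem_of_singleton_mem (mem_insert_of_mem (mem_image_of_mem _ hx))⟩

lemma min_le_card_inter (hS : Witnesses G k S) (hkn : k ≤ Fintype.card Ω) {U : Finset Ω}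
    (hU : ∀ g ∈ G, ∀ x, g x ∈ U ↔ x ∈ U) : min U.card (k - 1) ≤ (S ∩ U).card := by
  obtain rfl | hk := k.eq_zero_or_pos
  · simp
  obtain ⟨D, hDU, hD⟩ := exists_subset_card_eq (min_le_left U.card (k - 1))
  obtain ⟨g, hg, hDS⟩ := hS.exists_subset_image hkn (D := D) (by omega)
  have hDimage : D ⊆ (S ∩ U).image g := fun x hx => by
    obtain ⟨s, hs, rfl⟩ := mem_image.mp (hDS hx)
    exact mem_image_of_mem _ (mem_inter.mpr ⟨hs, (hU g hg s).mp (hDU hx)⟩)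
  exact hD ▸ (card_le_card hDimage).trans card_image_le

lemma card_le_one_or_card_compl_le_one (hS : Witnesses G k S) (hk2 : 2 < k)
    (hkn : k < Fintype.card Ω) {U : Finset Ω} (hU : ∀ g ∈ G, ∀ x, g x ∈ U ↔ x ∈ U) :
    U.card ≤ 1 ∨ Uᶜ.card ≤ 1 := by
  have hin := hS.min_le_card_inter hkn.le hU
  have hout := hS.min_le_card_inter hkn.le (U := Uᶜ) fun g hg x => by
    simp only [mem_compl, hU g hg]
  have hsplit := card_inter_add_card_sdiff S U
  rw [sdiff_eq_inter_compl, hS.1] at hsplit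
  have hcover := card_add_card_compl U
  omega

lemma exists_fixed_point (hS : Witnesses G k S) (hk2 : 2 < k) (hkn : k < Fintype.card Ω)
    {a b : Ω} (hab : ∀ g ∈ G, g a ≠ b) : ∃ c, ∀ g ∈ G, g c = c := by
  classical
  set O := univ.filter fun x => ∃ h ∈ G, h a = x
  have haO : a ∈ O := mem_filter.mpr ⟨mem_univ a, 1, G.one_mem, rfl⟩
  have hbO : b ∈ Oᶜ := by simpa [O] using hab
  have hO : ∀ g ∈ G, ∀ x, g x ∈ O ↔ x ∈ O := fun g hg x => by
    simp only [O, mem_filter, mem_univ, true_and]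
    constructor
    · rintro ⟨h, hh, hx⟩
      exact ⟨g⁻¹ * h, mul_mem (inv_mem hg) hh, by simp [hx]⟩
    · rintro ⟨h, hh, rfl⟩
      exact ⟨g * h, mul_mem hg hh, rfl⟩
  rcases hS.card_le_one_or_card_compl_le_one hk2 hkn hO with h | h
  · exact ⟨a, fun g hg => card_le_one.mp h _ ((hO g hg a).mpr haO) _ haO⟩
  · refine ⟨b, fun g hg => card_le_one.mp h _ ?_ _ hbO⟩
    simpa only [mem_compl, hO g hg] using hbO

lemma mem_of_forall_fixed (hS : Witnesses G k S) (hk2 : 2 ≤ k) (hkn : k ≤ Fintype.card Ω)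
    {a : Ω} (ha : ∀ g ∈ G, g a = a) : a ∈ S := by
  have h := hS.min_le_card_inter hkn (U := {a}) fun g hg x => by
    rw [mem_singleton, mem_singleton]
    exact ⟨fun h => g.injective (h.trans (ha g hg).symm), fun h => h ▸ ha g hg⟩
  by_contra haS
  rw [inter_singleton_of_notMem haS, card_empty, card_singleton] at h
  omega

lemma exists_image_eq_insert (hS : Witnesses G k S) (hkn : k ≤ Fintype.card Ω) {a : Ω}
    (haS : a ∈ S) (ha : ∀ g ∈ G, g a = a) {B : Finset Ω} (haB : a ∉ B) (hB : B.card = k - 1) :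
    ∃ g ∈ G, S.image g = insert a B := by
  have hk : 0 < k := hS.1 ▸ card_pos.mpr ⟨a, haS⟩
  obtain ⟨g, hg, hBS⟩ := hS.exists_subset_image hkn (D := B) (by omega)
  have hsub : insert a B ⊆ S.image g := insert_subset (ha g hg ▸ mem_image_of_mem _ haS) hBS
  refine ⟨g, hg, (eq_of_subset_of_card_le hsub ?_).symm⟩
  rw [card_image_of_injective _ g.injective, hS.1, card_insert_of_notMem haB, hB]
  omega

end Witnesses

/-- An intransitive group with the `k`-et property, `2 < k < n`, fixes a point and
acts `(k-1)`-homogeneously on the remaining points. -/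
theorem intransitive_kET (G : Subgroup (Equiv.Perm Ω)) (k : ℕ)
    (hintrans : ∃ a b : Ω, ∀ g ∈ G, g a ≠ b)
    (hk2 : 2 < k) (hkn : k < Fintype.card Ω)
    (het : ∃ S : Finset Ω, Witnesses G k S) :
    ∃ a : Ω, (∀ g ∈ G, g a = a) ∧
      ∀ A B : Finset Ω, a ∉ A → a ∉ B → A.card = k - 1 → B.card = k - 1 →
        ∃ g ∈ G, A.image ⇑g = B := by
  obtain ⟨S, hS⟩ := het
  obtain ⟨a₀, b₀, hab⟩ := hintrans
  obtain ⟨a, ha⟩ := hS.exists_fixed_point hk2 hkn hab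
  have haS := hS.mem_of_forall_fixed hk2.le hkn.le ha
  refine ⟨a, ha, fun A B haA haB hA hB => ?_⟩
  obtain ⟨gA, hgA, hSA⟩ := hS.exists_image_eq_insert hkn.le haS ha haA hA
  obtain ⟨gB, hgB, hSB⟩ := hS.exists_image_eq_insert hkn.le haS ha haB hB
  set h := gB * gA⁻¹
  have hh : h ∈ G := mul_mem hgB (inv_mem hgA)
  have hinsert : (insert a A).image h = insert a B := by
    rw [← hSA, ← hSB, image_image]
    congr 1
    ext x
    simp [h]
  refine ⟨h, hh, ?_⟩
  rw [← erase_insert haA, image_erase h.injective, hinsert, ha h hh, erase_insert haB]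
end

section
/- Suppose a permutation group G on a finite set Ω fixes a point a and acts (k-1)-homogeneously on Ω \ {a}, where k ≥ 2 and |Ω| ≥ k. Then G has the k-et property; moreover, any k-subset B of Ω containing a witnesses the k-et property. -/
open Finset

variable {Ω : Type*} [Fintype Ω] [DecidableEq Ω]

/-- If `G` fixes a point `a` and is `(k-1)`-homogeneous on the remaining points
(with `k ≥ 2`, `|Ω| ≥ k`), then `G` has the `k`-et property, witnessed by any
`k`-set containing `a`. -/
theorem kET_of_fixed_point_homogeneous (G : Subgroup (Equiv.Perm Ω)) (k : ℕ) (a : Ω)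
    (hk : 2 ≤ k) (hn : k ≤ Fintype.card Ω)
    (hfix : ∀ g ∈ G, g a = a)
    (hhom : ∀ A B : Finset Ω, a ∉ A → a ∉ B → A.card = k - 1 → B.card = k - 1 →
      ∃ g ∈ G, A.image ⇑g = B) :
    ∀ B : Finset Ω, a ∈ B → B.card = k → Witnesses G k B := by
  intro B haB hB
  refine ⟨hB, ?_⟩
  intro P hP hPk
  obtain ⟨hne, hdisj, hcov⟩ := hP
  obtain ⟨p₀, hp₀P, hap₀⟩ := hcov a
  classical
  set f : Finset Ω → Ω := fun q => if h : q.Nonempty then h.choose else a with hf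
  have hfmem : ∀ q ∈ P, f q ∈ q := by
    intro q hq
    simp only [hf, dif_pos (hne q hq)]
    exact (hne q hq).choose_spec
  set C := (P.erase p₀).image f with hC
  have hCmem : ∀ c ∈ C, ∃ q ∈ P.erase p₀, c ∈ q := by
    intro c hc
    obtain ⟨q, hq, rfl⟩ := Finset.mem_image.mp hc
    exact ⟨q, hq, hfmem q (Finset.mem_of_mem_erase hq)⟩
  have haC : a ∉ C := by
    intro h
    obtain ⟨q, hq, haq⟩ := hCmem a h
    exact Finset.disjoint_left.mp
      (hdisj q (Finset.mem_of_mem_erase hq) p₀ hp₀P (Finset.ne_of_mem_erase hq)) haq hap₀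
  have hCcard : C.card = k - 1 := by
    rw [hC, Finset.card_image_of_injOn, Finset.card_erase_of_mem hp₀P, hPk]
    intro q hq r hr hqr
    by_contra hne'
    have hd := hdisj q (Finset.mem_of_mem_erase hq) r (Finset.mem_of_mem_erase hr) hne'
    exact Finset.disjoint_left.mp hd (hfmem q (Finset.mem_of_mem_erase hq))
      (hqr ▸ hfmem r (Finset.mem_of_mem_erase hr))
  have haA : a ∉ B.erase a := Finset.notMem_erase a B
  have hAcard : (B.erase a).card = k - 1 := by
    rw [Finset.card_erase_of_mem haB, hB]
  obtain ⟨g, hgG, hgA⟩ := hhom (B.erase a) C haA haC hAcard hCcard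
  refine ⟨g, hgG, ?_⟩
  have hBim : B.image ⇑g = insert a C := by
    have : B = insert a (B.erase a) := (Finset.insert_erase haB).symm
    rw [this, Finset.image_insert, hgA, hfix g hgG]
  rw [hBim]
  intro p hpP
  by_cases hpp : p = p₀
  · subst hpp
    have : insert a C ∩ p = {a} := by
      ext x
      simp only [Finset.mem_inter, Finset.mem_insert, Finset.mem_singleton]
      constructor
      · rintro ⟨hx | hxC, hxp⟩
        · exact hx
        · obtain ⟨q, hq, hxq⟩ := hCmem x hxC
          exact absurd hxp (Finset.disjoint_left.mp
            (hdisj q (Finset.mem_of_mem_erase hq) p hp₀P (Finset.ne_of_mem_erase hq)) hxq)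
      · rintro rfl; exact ⟨Or.inl rfl, hap₀⟩
    rw [this, Finset.card_singleton]
  · have hap : a ∉ p := fun h =>
      Finset.disjoint_left.mp (hdisj p hpP p₀ hp₀P hpp) h hap₀
    have hpe : p ∈ P.erase p₀ := Finset.mem_erase.mpr ⟨hpp, hpP⟩
    have : insert a C ∩ p = {f p} := by
      ext x
      simp only [Finset.mem_inter, Finset.mem_insert, Finset.mem_singleton]
      constructor
      · rintro ⟨hx | hxC, hxp⟩
        · exact absurd (hx ▸ hxp) hap
        · obtain ⟨q, hq, rfl⟩ := Finset.mem_image.mp hxC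
          by_cases hqp : q = p
          · rw [hqp]
          · exact absurd hxp (Finset.disjoint_left.mp
              (hdisj q (Finset.mem_of_mem_erase hq) p hpP hqp)
              (hfmem q (Finset.mem_of_mem_erase hq)))
      · rintro rfl
        exact ⟨Or.inr (Finset.mem_image_of_mem f hpe), hfmem p hpP⟩
    rw [this, Finset.card_singleton]
end

section
/- A transitive permutation group G on a finite set Ω has the 2-et property if and only if G is not fully imprimitive, i.e., some orbital graph of G is connected. Moreover, a 2-subset {a,b} witnesses 2-et if and only if it is not contained in any proper block of imprimitivity of G. -/
open Finset

variable {Ω : Type*} [Fintype Ω] [DecidableEq Ω]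

/-- `B` is a block of imprimitivity for `G`. -/
def IsBlockOf (G : Subgroup (Equiv.Perm Ω)) (B : Finset Ω) : Prop :=
  ∀ g ∈ G, B.image ⇑g = B ∨ Disjoint (B.image ⇑g) B

/-- Key auxiliary lemma: a 2-set witnesses 2-et iff it lies in no proper block. -/
lemma witnesses_two_iff (G : Subgroup (Equiv.Perm Ω)) (S : Finset Ω) (hS : S.card = 2) :
    Witnesses G 2 S ↔
      ¬ ∃ B : Finset Ω, IsBlockOf G B ∧
          1 < B.card ∧ B.card < Fintype.card Ω ∧ S ⊆ B := by
  classical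
  obtain ⟨a, b, hab, rfl⟩ := Finset.card_eq_two.mp hS
  constructor
  · -- Witnesses → no proper block contains S
    rintro ⟨-, hW⟩ ⟨B, hB, h1, hlt, hSB⟩
    -- Use the partition {B, univ \ B}
    have hBne : B.Nonempty := Finset.card_pos.mp (by omega)
    have hcne : (Finset.univ \ B).Nonempty := by
      rw [← Finset.card_pos, Finset.card_sdiff_of_subset (Finset.subset_univ B), Finset.card_univ]
      omega
    have hne : B ≠ Finset.univ \ B := by
      obtain ⟨x, hx⟩ := hBne
      intro h
      exact (Finset.mem_sdiff.mp (h ▸ hx)).2 hx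
    set P : Finset (Finset Ω) := {B, Finset.univ \ B} with hP
    have hPart : IsPartition P := by
      refine ⟨?_, ?_, ?_⟩
      · intro p hp
        rcases Finset.mem_insert.mp hp with rfl | hp
        · exact hBne
        · rw [Finset.mem_singleton.mp hp]; exact hcne
      · intro p hp q hq hpq
        rcases Finset.mem_insert.mp hp with rfl | hp <;>
          rcases Finset.mem_insert.mp hq with rfl | hq
        · exact absurd rfl hpq
        · rw [Finset.mem_singleton.mp hq]
          exact Finset.disjoint_sdiff
        · rw [Finset.mem_singleton.mp hp]
          exact Finset.sdiff_disjoint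
        · rw [Finset.mem_singleton.mp hp, Finset.mem_singleton.mp hq] at hpq
          exact absurd rfl hpq
      · intro x
        by_cases hx : x ∈ B
        · exact ⟨B, Finset.mem_insert_self _ _, hx⟩
        · exact ⟨Finset.univ \ B, Finset.mem_insert_of_mem (Finset.mem_singleton_self _),
            Finset.mem_sdiff.mpr ⟨Finset.mem_univ x, hx⟩⟩
    have hPcard : P.card = 2 := Finset.card_pair hne
    obtain ⟨g, hg, htr⟩ := hW P hPart hPcard
    have h1' := htr B (Finset.mem_insert_self _ _)
    have himg : ({a, b} : Finset Ω).image ⇑g ⊆ B.image ⇑g :=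
      Finset.image_subset_image hSB
    have hcard2 : (({a, b} : Finset Ω).image ⇑g).card = 2 := by
      rw [Finset.card_image_of_injective _ g.injective, hS]
    rcases hB g hg with heq | hdisj
    · rw [heq] at himg
      rw [Finset.inter_eq_left.mpr himg, hcard2] at h1'
      omega
    · have : Disjoint (({a, b} : Finset Ω).image ⇑g) B :=
        Disjoint.mono_left himg hdisj
      rw [Finset.disjoint_iff_inter_eq_empty.mp this] at h1'
      simp at h1'
  · -- no proper block contains S → Witnesses
    intro hnoB
    refine ⟨hS, ?_⟩
    intro P hPart hP2
    by_contra hno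
    push_neg at hno
    obtain ⟨p, q, hpq, rfl⟩ := Finset.card_eq_two.mp hP2
    obtain ⟨hne, hdis, hcov⟩ := hPart
    have hdpq : Disjoint p q :=
      hdis p (Finset.mem_insert_self _ _) q
        (Finset.mem_insert_of_mem (Finset.mem_singleton_self _)) hpq
    -- key: every image {g a, g b} lies entirely in p or entirely in q
    have key : ∀ g ∈ G, ((g : Equiv.Perm Ω) a ∈ p ↔ (g : Equiv.Perm Ω) b ∈ p) := by
      intro g hg
      by_contra hcon
      apply hno g hg
      have hmemcov : ∀ x : Ω, x ∈ p ∨ x ∈ q := by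
        intro x
        obtain ⟨t, ht, hxt⟩ := hcov x
        rcases Finset.mem_insert.mp ht with rfl | ht
        · exact Or.inl hxt
        · rw [Finset.mem_singleton.mp ht] at hxt; exact Or.inr hxt
      have himg : ({a, b} : Finset Ω).image ⇑g = {g a, g b} := by
        simp [Finset.image_insert]
      -- one of g a, g b in p, the other in q
      have hsplit : (g a ∈ p ∧ g b ∈ q) ∨ (g b ∈ p ∧ g a ∈ q) := by
        rcases hmemcov (g a) with ha | ha <;> rcases hmemcov (g b) with hb | hb
        · exact absurd (iff_of_true ha hb) hcon
        · exact Or.inl ⟨ha, hb⟩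
        · exact Or.inr ⟨hb, ha⟩
        · exact absurd (iff_of_false (fun h => Finset.disjoint_left.mp hdpq h ha)
            (fun h => Finset.disjoint_left.mp hdpq h hb)) hcon
      intro t ht
      have hc : ∀ x y : Ω, x ∈ p → y ∈ q → x ≠ y →
          (({x, y} : Finset Ω) ∩ p).card = 1 ∧ (({x, y} : Finset Ω) ∩ q).card = 1 := by
        intro x y hx hy hxy
        have h1 : ({x, y} : Finset Ω) ∩ p = {x} := by
          ext z
          simp only [Finset.mem_inter, Finset.mem_insert, Finset.mem_singleton]
          constructor
          · rintro ⟨rfl | rfl, hz⟩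
            · rfl
            · exact absurd hz (fun h => Finset.disjoint_left.mp hdpq h hy)
          · rintro rfl; exact ⟨Or.inl rfl, hx⟩
        have h2 : ({x, y} : Finset Ω) ∩ q = {y} := by
          ext z
          simp only [Finset.mem_inter, Finset.mem_insert, Finset.mem_singleton]
          constructor
          · rintro ⟨rfl | rfl, hz⟩
            · exact absurd hx (fun h => Finset.disjoint_left.mp hdpq h hz)
            · rfl
          · rintro rfl; exact ⟨Or.inr rfl, hy⟩
        rw [h1, h2]
        exact ⟨Finset.card_singleton _, Finset.card_singleton _⟩
      have hgab : g a ≠ g b := fun h => hab (g.injective h)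
      rcases Finset.mem_insert.mp ht with rfl | ht
      · -- t = p
        rcases hsplit with ⟨h1, h2⟩ | ⟨h1, h2⟩
        · rw [himg]; exact (hc _ _ h1 h2 hgab).1
        · rw [himg, Finset.pair_comm]; exact (hc _ _ h1 h2 hgab.symm).1
      · rw [Finset.mem_singleton.mp ht]
        rcases hsplit with ⟨h1, h2⟩ | ⟨h1, h2⟩
        · rw [himg]; exact (hc _ _ h1 h2 hgab).2
        · rw [himg, Finset.pair_comm]; exact (hc _ _ h1 h2 hgab.symm).2
    -- the orbital relation
    set r : Ω → Ω → Prop := fun x y =>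
      ∃ g ∈ G, (x = (g : Equiv.Perm Ω) a ∧ y = (g : Equiv.Perm Ω) b) ∨
        (x = (g : Equiv.Perm Ω) b ∧ y = (g : Equiv.Perm Ω) a) with hr
    -- equivariance of the generated equivalence
    have hequiv : ∀ g ∈ G, ∀ x y : Ω, Relation.EqvGen r x y →
        Relation.EqvGen r ((g : Equiv.Perm Ω) x) ((g : Equiv.Perm Ω) y) := by
      intro g hg x y h
      induction h with
      | rel x y hxy =>
          obtain ⟨h, hh, hcase⟩ := hxy
          apply Relation.EqvGen.rel
          refine ⟨g * h, mul_mem hg hh, ?_⟩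
          rcases hcase with ⟨rfl, rfl⟩ | ⟨rfl, rfl⟩
          · exact Or.inl ⟨rfl, rfl⟩
          · exact Or.inr ⟨rfl, rfl⟩
      | refl x => exact Relation.EqvGen.refl _
      | symm x y _ ih => exact Relation.EqvGen.symm _ _ ih
      | trans x y z _ _ ih1 ih2 => exact Relation.EqvGen.trans _ _ _ ih1 ih2
    -- the component of a
    set B : Finset Ω := Finset.univ.filter (fun x => Relation.EqvGen r a x) with hBdef
    have hmemB : ∀ x : Ω, x ∈ B ↔ Relation.EqvGen r a x := by
      intro x; simp [hBdef]
    have himgB : ∀ g ∈ G, B.image ⇑(g : Equiv.Perm Ω) =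
        Finset.univ.filter (fun x => Relation.EqvGen r ((g : Equiv.Perm Ω) a) x) := by
      intro g hg
      ext x
      simp only [Finset.mem_image, Finset.mem_filter, Finset.mem_univ, true_and]
      constructor
      · rintro ⟨y, hy, rfl⟩
        exact hequiv g hg _ _ ((hmemB y).mp hy)
      · intro hx
        refine ⟨(g : Equiv.Perm Ω)⁻¹ x, ?_, by simp⟩
        rw [hmemB]
        have := hequiv g⁻¹ (inv_mem hg) _ _ hx
        simpa using this
    have hblock : IsBlockOf G B := by
      intro g hg
      rw [himgB g hg]
      by_cases hcase : Relation.EqvGen r a ((g : Equiv.Perm Ω) a)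
      · left
        ext x
        simp only [Finset.mem_filter, Finset.mem_univ, true_and, hmemB]
        exact ⟨fun h => Relation.EqvGen.trans _ _ _ hcase h,
          fun h => Relation.EqvGen.trans _ _ _ (Relation.EqvGen.symm _ _ hcase) h⟩
      · right
        rw [Finset.disjoint_left]
        intro x hx hx'
        rw [hmemB] at hx'
        rw [Finset.mem_filter] at hx
        exact hcase (Relation.EqvGen.trans _ _ _ hx' (Relation.EqvGen.symm _ _ hx.2))
    have haB : a ∈ B := (hmemB a).mpr (Relation.EqvGen.refl a)
    have hbB : b ∈ B := by
      rw [hmemB]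
      exact Relation.EqvGen.rel _ _ ⟨1, one_mem G, Or.inl (by simp)⟩
    have hcard : 1 < B.card := by
      have : ({a, b} : Finset Ω) ⊆ B := by
        intro x hx
        rcases Finset.mem_insert.mp hx with rfl | hx
        · exact haB
        · rw [Finset.mem_singleton.mp hx]; exact hbB
      have := Finset.card_le_card this
      rw [hS] at this
      omega
    -- B is contained in the part containing a
    have hmemcov : ∀ x : Ω, x ∈ p ∨ x ∈ q := by
      intro x
      obtain ⟨t, ht, hxt⟩ := hcov x
      rcases Finset.mem_insert.mp ht with rfl | ht
      · exact Or.inl hxt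
      · rw [Finset.mem_singleton.mp ht] at hxt; exact Or.inr hxt
    have hrinv : ∀ x y : Ω, r x y → (x ∈ p ↔ y ∈ p) := by
      rintro x y ⟨g, hg, ⟨rfl, rfl⟩ | ⟨rfl, rfl⟩⟩
      · exact key g hg
      · exact (key g hg).symm
    have hinv : ∀ x y : Ω, Relation.EqvGen r x y → (x ∈ p ↔ y ∈ p) := by
      intro x y h
      induction h with
      | rel x y hxy => exact hrinv x y hxy
      | refl x => exact Iff.rfl
      | symm x y _ ih => exact ih.symm
      | trans x y z _ _ ih1 ih2 => exact ih1.trans ih2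
    have hqinv : ∀ x y : Ω, Relation.EqvGen r x y → (x ∈ q ↔ y ∈ q) := by
      intro x y h
      have hp := hinv x y h
      constructor
      · intro hx
        rcases hmemcov y with hy | hy
        · exact absurd (hp.mpr hy) (fun h' => Finset.disjoint_left.mp hdpq h' hx)
        · exact hy
      · intro hy
        rcases hmemcov x with hx | hx
        · exact absurd (hp.mp hx) (fun h' => Finset.disjoint_left.mp hdpq h' hy)
        · exact hx
    -- find a point outside B
    have hlt : B.card < Fintype.card Ω := by
      have hssub : B ⊂ Finset.univ := by
        rw [Finset.ssubset_univ_iff]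
        intro hBuniv
        rcases hmemcov a with ha | ha
        · -- a ∈ p ; q is nonempty, a point of q is outside B
          obtain ⟨c, hc⟩ := hne q (Finset.mem_insert_of_mem (Finset.mem_singleton_self _))
          have hcB : c ∈ B := hBuniv ▸ Finset.mem_univ c
          have := (hinv a c ((hmemB c).mp hcB)).mp ha
          exact Finset.disjoint_left.mp hdpq this hc
        · obtain ⟨c, hc⟩ := hne p (Finset.mem_insert_self _ _)
          have hcB : c ∈ B := hBuniv ▸ Finset.mem_univ c
          have := (hqinv a c ((hmemB c).mp hcB)).mp ha
          exact Finset.disjoint_left.mp hdpq hc this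
      calc B.card < Finset.univ.card := Finset.card_lt_card hssub
        _ = Fintype.card Ω := Finset.card_univ
    exact hnoB ⟨B, hblock, hcard, hlt, by
      intro x hx
      rcases Finset.mem_insert.mp hx with rfl | hx
      · exact haB
      · rw [Finset.mem_singleton.mp hx]; exact hbB⟩

/-- A transitive group has the `2`-et property iff it is not fully imprimitive
(i.e. iff some two points lie in no common proper block); moreover a `2`-set
witnesses `2`-et iff it is not contained in any proper block of imprimitivity. -/
theorem two_et_iff_not_fully_imprimitive (G : Subgroup (Equiv.Perm Ω))
    (htrans : ∀ a b : Ω, ∃ g ∈ G, g a = b) :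
    ((∃ S : Finset Ω, Witnesses G 2 S) ↔
      ¬ (∀ a b : Ω, a ≠ b → ∃ B : Finset Ω, IsBlockOf G B ∧
          1 < B.card ∧ B.card < Fintype.card Ω ∧ a ∈ B ∧ b ∈ B)) ∧
    (∀ S : Finset Ω, S.card = 2 →
      (Witnesses G 2 S ↔
        ¬ ∃ B : Finset Ω, IsBlockOf G B ∧
            1 < B.card ∧ B.card < Fintype.card Ω ∧ S ⊆ B)) := by
  constructor
  · constructor
    · rintro ⟨S, hW⟩ hall
      have hS := hW.1
      obtain ⟨a, b, hab, rfl⟩ := Finset.card_eq_two.mp hS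
      obtain ⟨B, hB, h1, hlt, haB, hbB⟩ := hall a b hab
      exact (witnesses_two_iff G _ hS).mp hW ⟨B, hB, h1, hlt, by
        intro x hx
        rcases Finset.mem_insert.mp hx with rfl | hx
        · exact haB
        · rw [Finset.mem_singleton.mp hx]; exact hbB⟩
    · intro hall
      push_neg at hall
      obtain ⟨a, b, hab, hnoB⟩ := hall
      refine ⟨{a, b}, (witnesses_two_iff G _ (Finset.card_pair hab)).mpr ?_⟩
      rintro ⟨B, hB, h1, hlt, hSB⟩
      exact hnoB B hB h1 hlt (hSB (Finset.mem_insert_self _ _))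
        (hSB (Finset.mem_insert_of_mem (Finset.mem_singleton_self _)))
  · intro S hS
    exact witnesses_two_iff G S hS
end

section
/- Suppose G is a permutation group on a finite set Ω with two orbits A and B, and G acts transitively on A × B. Then G has the 2-et property, witnessed by any 2-set containing one point of A and one point of B. -/
open Finset

variable {Ω : Type*} [Fintype Ω] [DecidableEq Ω]

lemma pair_inter_aux {Ω : Type*} [DecidableEq Ω] {a' b' : Ω} {p q : Finset Ω}
    (h1 : a' ∈ p) (h2 : b' ∈ q) (hd : Disjoint p q) (hab : a' ≠ b') :
    (({a', b'} : Finset Ω) ∩ p).card = 1 ∧ (({a', b'} : Finset Ω) ∩ q).card = 1 := by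
  have hbp : b' ∉ p := fun h => (Finset.disjoint_left.mp hd h) h2
  have haq : a' ∉ q := fun h => (Finset.disjoint_left.mp hd h1) h
  constructor
  · have : ({a', b'} : Finset Ω) ∩ p = {a'} := by
      ext x
      simp only [Finset.mem_inter, Finset.mem_insert, Finset.mem_singleton]
      constructor
      · rintro ⟨h | h, hx⟩
        · exact h
        · exact absurd (h ▸ hx) hbp
      · rintro rfl; exact ⟨Or.inl rfl, h1⟩
    rw [this, Finset.card_singleton]
  · have : ({a', b'} : Finset Ω) ∩ q = {b'} := by
      ext x
      simp only [Finset.mem_inter, Finset.mem_insert, Finset.mem_singleton]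
      constructor
      · rintro ⟨h | h, hx⟩
        · exact absurd (h ▸ hx) haq
        · exact h
      · rintro rfl; exact ⟨Or.inr rfl, h2⟩
    rw [this, Finset.card_singleton]

/-- If `G` has two orbits `A` and `B` and acts transitively on `A × B`, then `G`
has the `2`-et property, witnessed by any `2`-set with one point in each orbit. -/
theorem two_et_of_two_orbits (G : Subgroup (Equiv.Perm Ω)) (A B : Finset Ω)
    (hdisj : Disjoint A B) (huniv : A ∪ B = Finset.univ)
    (hAne : A.Nonempty) (hBne : B.Nonempty)
    (hinvA : ∀ g ∈ G, ∀ x ∈ A, g x ∈ A)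
    (hinvB : ∀ g ∈ G, ∀ x ∈ B, g x ∈ B)
    (hprod : ∀ a ∈ A, ∀ a' ∈ A, ∀ b ∈ B, ∀ b' ∈ B,
      ∃ g ∈ G, g a = a' ∧ g b = b') :
    ∀ a ∈ A, ∀ b ∈ B, Witnesses G 2 {a, b} := by
  
  intro a ha b hb
  have hab : a ≠ b := fun h => (Finset.disjoint_left.mp hdisj ha) (h ▸ hb)
  constructor
  · rw [Finset.card_insert_of_notMem (by simpa using hab), Finset.card_singleton]
  · intro P hP hPcard
    obtain ⟨hne, hdP, hcov⟩ := hP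
    obtain ⟨p, q, hpq, rfl⟩ := Finset.card_eq_two.mp hPcard
    have hp : p ∈ ({p, q} : Finset (Finset Ω)) := Finset.mem_insert_self _ _
    have hq : q ∈ ({p, q} : Finset (Finset Ω)) := by simp
    have hdpq : Disjoint p q := hdP p hp q hq hpq
    obtain ⟨x, hx⟩ := hne p hp
    obtain ⟨y, hy⟩ := hne q hq
    have hmem : ∀ z : Ω, z ∈ A ∨ z ∈ B := by
      intro z
      have := Finset.mem_univ z
      rw [← huniv, Finset.mem_union] at this
      exact this
    -- find a' ∈ A, b' ∈ B in different parts
    have key : ∃ a' ∈ A, ∃ b' ∈ B, (a' ∈ p ∧ b' ∈ q) ∨ (a' ∈ q ∧ b' ∈ p) := by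
      rcases hmem x with hxA | hxB <;> rcases hmem y with hyA | hyB
      · obtain ⟨b', hb'⟩ := hBne
        obtain ⟨r, hr, hbr⟩ := hcov b'
        rcases Finset.mem_insert.mp hr with rfl | hr
        · exact ⟨y, hyA, b', hb', Or.inr ⟨hy, hbr⟩⟩
        · rw [Finset.mem_singleton] at hr
          subst hr
          exact ⟨x, hxA, b', hb', Or.inl ⟨hx, hbr⟩⟩
      · exact ⟨x, hxA, y, hyB, Or.inl ⟨hx, hy⟩⟩
      · exact ⟨y, hyA, x, hxB, Or.inr ⟨hy, hx⟩⟩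
      · obtain ⟨a', ha'⟩ := hAne
        obtain ⟨r, hr, har⟩ := hcov a'
        rcases Finset.mem_insert.mp hr with rfl | hr
        · exact ⟨a', ha', y, hyB, Or.inl ⟨har, hy⟩⟩
        · rw [Finset.mem_singleton] at hr
          subst hr
          exact ⟨a', ha', x, hxB, Or.inr ⟨har, hx⟩⟩
    obtain ⟨a', ha', b', hb', hor⟩ := key
    have hab' : a' ≠ b' := fun h => (Finset.disjoint_left.mp hdisj ha') (h ▸ hb')
    obtain ⟨g, hg, hga, hgb⟩ := hprod a ha a' ha' b hb b' hb'
    refine ⟨g, hg, ?_⟩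
    have himg : ({a, b} : Finset Ω).image ⇑g = {a', b'} := by
      rw [Finset.image_insert, Finset.image_singleton, hga, hgb]
    intro t ht
    rw [himg]
    rcases Finset.mem_insert.mp ht with rfl | ht
    · rcases hor with ⟨h1, h2⟩ | ⟨h1, h2⟩
      · exact (pair_inter_aux h1 h2 hdpq hab').1
      · rw [Finset.pair_comm]
        exact (pair_inter_aux h2 h1 hdpq hab'.symm).1
    · rw [Finset.mem_singleton] at ht
      subst ht
      rcases hor with ⟨h1, h2⟩ | ⟨h1, h2⟩
      · exact (pair_inter_aux h1 h2 hdpq hab').2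
      · rw [Finset.pair_comm]
        exact (pair_inter_aux h2 h1 hdpq hab'.symm).2
end

section
/- Let G be a transitive but imprimitive permutation group on a finite set Ω with the 3-et property. Then every nontrivial block system of G has exactly two blocks, and any witnessing 3-set has two points in one block and one in the other. Moreover, if |Ω| > 4, then G has a unique nontrivial block system. -/
open Finset

variable {Ω : Type*} [Fintype Ω] [DecidableEq Ω]

/-- `P` is a block system for `G`: a `G`-invariant partition of `Ω`. -/
def IsBlockSystem (G : Subgroup (Equiv.Perm Ω)) (P : Finset (Finset Ω)) : Prop :=
  IsPartition P ∧ ∀ p ∈ P, ∀ g ∈ G, p.image ⇑g ∈ P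

/-- A block system is nontrivial if all its parts have size strictly between `1`
and `|Ω|`. -/
def NontrivialSystem (P : Finset (Finset Ω)) : Prop :=
  ∀ p ∈ P, 1 < p.card ∧ p.card < Fintype.card Ω

/-!
A property of `S` expressed through a `G`-invariant family of sets passes from the image `g S`
to `S`, and the 3-et property makes `g S` a transversal of any 3-partition we like.
If the family has a member `X` with `2 ≤ |X| < |Ω|`, the 3-partition `{x}, X \ {x}, Xᶜ` shows
that `S` meets some member twice; a 3-partition each of whose parts is a union of members shows
that `S` meets every member at most once. So no invariant family with such a member is finer than
a 3-partition.

Three blocks `p₁, p₂, p₃` of a block system would be finer than `p₁, p₂, (p₁ ∪ p₂)ᶜ`, so a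
nontrivial system is `{A, Aᶜ}`. The 3-partition `A, {y}, Aᶜ \ {y}` has a part outside each block,
so `S` lies in neither block and splits as 2 + 1. For two different systems `{A, Aᶜ}` and
`{B, Bᶜ}`, transitivity makes all blocks of size `|Ω|/2 ≥ 3`, so the four intersections are
nonempty, one of `A ∩ B`, `A ∩ Bᶜ` has two points, and the intersections are finer than
`A ∩ Bᶜ, Aᶜ ∩ B, (A ∩ B) ∪ (Aᶜ ∩ Bᶜ)`.
-/

section

variable {α : Type*} [DecidableEq α]

def IsInvariantFamily (G : Subgroup (Equiv.Perm α)) (F : Finset (Finset α)) : Prop :=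
  ∀ p ∈ F, ∀ g ∈ G, p.image ⇑g ∈ F

lemma card_image_inter_image (g : Equiv.Perm α) (T p : Finset α) :
    #(T.image g ∩ p.image g) = #(T ∩ p) := by
  rw [← image_inter _ _ g.injective, card_image_of_injective _ g.injective]

variable {G : Subgroup (Equiv.Perm α)} {F P Q : Finset (Finset α)}

lemma IsInvariantFamily.image₂_inter (hP : IsInvariantFamily G P) (hQ : IsInvariantFamily G Q) :
    IsInvariantFamily G (image₂ (· ∩ ·) P Q) := by
  intro r hr g hg
  obtain ⟨p, hp, q, hq, rfl⟩ := mem_image₂.mp hr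
  rw [image_inter _ _ g.injective]
  exact mem_image₂_of_mem (hP p hp g hg) (hQ q hq g hg)

lemma IsInvariantFamily.exists_card_inter_eq (hF : IsInvariantFamily G F) {g : Equiv.Perm α}
    (hg : g ∈ G) {X : Finset α} (hX : X ∈ F) (T : Finset α) :
    ∃ Y ∈ F, #(T ∩ Y) = #(T.image g ∩ X) := by
  refine ⟨X.image ⇑g⁻¹, hF X hX _ (inv_mem hg), ?_⟩
  rw [← card_image_inter_image g, image_image]
  simp

lemma IsPartition.eq_of_mem (hP : IsPartition P) {p q : Finset α} (hp : p ∈ P) (hq : q ∈ P) {x : α}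
    (hxp : x ∈ p) (hxq : x ∈ q) : p = q := by
  by_contra hpq
  exact disjoint_left.mp (hP.2.1 p hp q hq hpq) hxp hxq

lemma IsPartition.card_eq_card (hP : IsPartition P) (hG : IsInvariantFamily G P)
    (htrans : ∀ a b : α, ∃ g ∈ G, g a = b) {p q : Finset α} (hp : p ∈ P) (hq : q ∈ P) :
    #p = #q := by
  obtain ⟨a, ha⟩ := hP.1 p hp
  obtain ⟨b, hb⟩ := hP.1 q hq
  obtain ⟨g, hg, rfl⟩ := htrans a b
  rw [← hP.eq_of_mem (hG p hp g hg) hq (mem_image_of_mem g ha) hb,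
    card_image_of_injective _ g.injective]

lemma isPartition_triple {X Y Z : Finset α} (hX : X.Nonempty) (hY : Y.Nonempty)
    (hZ : Z.Nonempty) (hXY : Disjoint X Y) (hXZ : Disjoint X Z) (hYZ : Disjoint Y Z)
    (hcover : ∀ x, x ∈ X ∨ x ∈ Y ∨ x ∈ Z) :
    IsPartition {X, Y, Z} ∧ #{X, Y, Z} = 3 := by
  refine ⟨⟨?_, ?_, by simpa using hcover⟩, card_eq_three.mpr
    ⟨X, Y, Z, hXY.ne hX.ne_empty, hXZ.ne hX.ne_empty, hYZ.ne hY.ne_empty, rfl⟩⟩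
  · simp only [mem_insert, mem_singleton]
    rintro p (rfl | rfl | rfl) <;> assumption
  · simp only [mem_insert, mem_singleton]
    rintro p (rfl | rfl | rfl) q (rfl | rfl | rfl) hpq <;>
      first | exact absurd rfl hpq | assumption | exact Disjoint.symm ‹_›

variable {T : Finset α} {R : Finset (Finset α)}

lemma IsTransversal.inter_nonempty (hT : IsTransversal T R) {r : Finset α} (hr : r ∈ R) :
    (T ∩ r).Nonempty :=
  card_pos.mp (by rw [hT r hr]; exact one_pos)

lemma IsTransversal.card_inter_le_one (hT : IsTransversal T R) {p r : Finset α} (hr : r ∈ R)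
    (hpr : p ⊆ r) : #(T ∩ p) ≤ 1 :=
  hT r hr ▸ card_le_card (inter_subset_inter_left hpr)

lemma IsTransversal.not_subset (hT : IsTransversal T R) {p r : Finset α} (hr : r ∈ R)
    (hpr : Disjoint p r) : ¬ T ⊆ p := fun hTp => by
  obtain ⟨x, hx⟩ := hT.inter_nonempty hr
  exact disjoint_left.mp hpr (hTp (mem_inter.mp hx).1) (mem_inter.mp hx).2

end

section

variable {G : Subgroup (Equiv.Perm Ω)} {P : Finset (Finset Ω)} {A B : Finset Ω}

lemma IsPartition.exists_eq_pair_compl (hP : IsPartition P) (h2 : #P = 2) :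
    ∃ A ∈ P, P = {A, Aᶜ} := by
  obtain ⟨A, B, hAB, rfl⟩ := card_eq_two.mp h2
  refine ⟨A, mem_insert_self A _, ?_⟩
  congr
  ext x
  refine ⟨fun hxB => mem_compl.mpr fun hxA => hAB (hP.eq_of_mem (by simp) (by simp) hxA hxB),
    fun hxA => ?_⟩
  obtain ⟨p, hp, hxp⟩ := hP.2.2 x
  rcases mem_insert.mp hp with rfl | hp
  · exact absurd hxp (mem_compl.mp hxA)
  · rwa [← mem_singleton.mp hp]

lemma IsPartition.exists_coarsening_of_two_lt_card (hP : IsPartition P) (h3 : 2 < #P) :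
    ∃ R, IsPartition R ∧ #R = 3 ∧ ∀ p ∈ P, ∃ r ∈ R, p ⊆ r := by
  obtain ⟨p₁, p₂, p₃, h₁, h₂, h₃, h₁₂, h₁₃, h₂₃⟩ := two_lt_card_iff.mp h3
  have disj {p q} (hp : p ∈ P) (hq : q ∈ P) (hpq : p ≠ q) := hP.2.1 p hp q hq hpq
  have subset_rest {p} (hp : p ∈ P) (hp₁ : p ≠ p₁) (hp₂ : p ≠ p₂) : p ⊆ (p₁ ∪ p₂)ᶜ :=
    subset_compl_iff_disjoint_right.mpr
      (disjoint_union_right.mpr ⟨disj hp h₁ hp₁, disj hp h₂ hp₂⟩)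
  obtain ⟨hR, hR3⟩ := isPartition_triple (hP.1 p₁ h₁) (hP.1 p₂ h₂)
    ((hP.1 p₃ h₃).mono (subset_rest h₃ h₁₃.symm h₂₃.symm)) (disj h₁ h₂ h₁₂)
    (disjoint_compl_right.mono_left subset_union_left)
    (disjoint_compl_right.mono_left subset_union_right)
    (fun x => by simp only [mem_compl, mem_union]; tauto)
  refine ⟨_, hR, hR3, fun p hp => ?_⟩
  by_cases hp₁ : p = p₁
  · exact ⟨p₁, by simp, hp₁.le⟩
  by_cases hp₂ : p = p₂
  · exact ⟨p₂, by simp, hp₂.le⟩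
  exact ⟨_, by simp, subset_rest hp hp₁ hp₂⟩

lemma exists_isPartition_three_disjoint_of_pair_compl (hA : A.Nonempty) (hAc : 1 < #Aᶜ) :
    ∃ R, IsPartition R ∧ #R = 3 ∧ ∀ p ∈ ({A, Aᶜ} : Finset (Finset Ω)), ∃ r ∈ R, Disjoint p r := by
  obtain ⟨y, hy⟩ : Aᶜ.Nonempty := card_pos.mp (by omega)
  have hyA : Disjoint A {y} := disjoint_singleton_right.mpr (mem_compl.mp hy)
  obtain ⟨hR, hR3⟩ := isPartition_triple hA (singleton_nonempty y)
    (card_pos.mp (by rw [card_erase_of_mem hy]; omega)) hyA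
    (disjoint_compl_right.mono_right (erase_subset y Aᶜ))
    (disjoint_singleton_left.mpr (notMem_erase y Aᶜ))
    (fun z => by by_cases hzy : z = y <;> simp [hzy, em])
  refine ⟨_, hR, hR3, ?_⟩
  simp only [mem_insert, mem_singleton, forall_eq_or_imp, forall_eq]
  exact ⟨⟨{y}, by simp, hyA⟩, ⟨A, by simp, disjoint_compl_left⟩⟩

lemma inter_compl_nonempty_of_card_eq (h : #A = #B) (hne : A ≠ B) :
    (A ∩ Bᶜ).Nonempty := by
  rw [← sdiff_eq_inter_compl, sdiff_nonempty]
  exact fun hAB => hne (eq_of_subset_of_card_le hAB h.ge)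

lemma isPartition_crossing (h₁ : (A ∩ Bᶜ).Nonempty) (h₂ : (Aᶜ ∩ B).Nonempty)
    (h₃ : (A ∩ B).Nonempty) :
    IsPartition {A ∩ Bᶜ, Aᶜ ∩ B, A ∩ B ∪ Aᶜ ∩ Bᶜ} ∧ #{A ∩ Bᶜ, Aᶜ ∩ B, A ∩ B ∪ Aᶜ ∩ Bᶜ} = 3 :=
  isPartition_triple h₁ h₂ (h₃.mono subset_union_left)
    (by simp only [disjoint_left, mem_inter, mem_compl]; tauto)
    (by simp only [disjoint_left, mem_inter, mem_union, mem_compl]; tauto)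
    (by simp only [disjoint_left, mem_inter, mem_union, mem_compl]; tauto)
    (fun x => by simp only [mem_inter, mem_union, mem_compl]; tauto)

lemma IsBlockSystem.two_mul_card_eq (hP : IsBlockSystem G {A, Aᶜ})
    (htrans : ∀ a b : Ω, ∃ g ∈ G, g a = b) :
    2 * #A = Fintype.card Ω := by
  have := hP.1.card_eq_card hP.2 htrans (p := A) (q := Aᶜ) (by simp) (by simp)
  rw [card_compl] at this
  have := card_le_univ A
  omega

end

namespace Witnesses

variable {G : Subgroup (Equiv.Perm Ω)} {S : Finset Ω} {F R P Q : Finset (Finset Ω)}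

lemma exists_two_le_card_inter (hS : Witnesses G 3 S) (hF : IsInvariantFamily G F)
    {X : Finset Ω} (hX : X ∈ F) (h2 : 2 ≤ #X) (hlt : #X < Fintype.card Ω) :
    ∃ Y ∈ F, 2 ≤ #(S ∩ Y) := by
  obtain ⟨x, hx⟩ : X.Nonempty := card_pos.mp (by omega)
  obtain ⟨hR, hR3⟩ := isPartition_triple (singleton_nonempty x)
    (card_pos.mp (by rw [card_erase_of_mem hx]; omega))
    (card_pos.mp (by rw [card_compl]; omega))
    (disjoint_singleton_left.mpr (notMem_erase x X))
    (disjoint_singleton_left.mpr (notMem_compl.mpr hx))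
    (disjoint_compl_right.mono_left (erase_subset x X))
    (fun y => by by_cases hyx : y = x <;> simp [hyx, em])
  obtain ⟨g, hg, hT⟩ := hS.2 _ hR hR3
  obtain ⟨a, ha⟩ := hT.inter_nonempty (r := {x}) (by simp)
  obtain ⟨b, hb⟩ := hT.inter_nonempty (r := X.erase x) (by simp)
  simp only [mem_inter, mem_singleton, mem_erase] at ha hb
  obtain ⟨Y, hY, hSY⟩ := hF.exists_card_inter_eq hg hX S
  refine ⟨Y, hY, hSY ▸ one_lt_card.mpr ⟨a, ?_, b, ?_, ?_⟩⟩
  · exact mem_inter.mpr ⟨ha.1, ha.2 ▸ hx⟩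
  · exact mem_inter.mpr ⟨hb.1, hb.2.2⟩
  · exact ha.2 ▸ Ne.symm hb.2.1

omit [Fintype Ω] in
lemma card_inter_le_one (hS : Witnesses G 3 S) (hF : IsInvariantFamily G F)
    (hR : IsPartition R) (hR3 : #R = 3) (hFR : ∀ p ∈ F, ∃ r ∈ R, p ⊆ r) :
    ∀ p ∈ F, #(S ∩ p) ≤ 1 := by
  obtain ⟨g, hg, hT⟩ := hS.2 R hR hR3
  intro p hp
  obtain ⟨r, hr, hpr⟩ := hFR _ (hF p hp g hg)
  rw [← card_image_inter_image g]
  exact hT.card_inter_le_one hr hpr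

lemma not_refines (hS : Witnesses G 3 S) (hF : IsInvariantFamily G F) {X : Finset Ω}
    (hX : X ∈ F) (h2 : 2 ≤ #X) (hlt : #X < Fintype.card Ω) (hR : IsPartition R)
    (hR3 : #R = 3) : ¬ ∀ p ∈ F, ∃ r ∈ R, p ⊆ r := fun hFR => by
  obtain ⟨Y, hY, h2Y⟩ := hS.exists_two_le_card_inter hF hX h2 hlt
  have := hS.card_inter_le_one hF hR hR3 hFR Y hY
  omega

omit [Fintype Ω] in
lemma not_subset (hS : Witnesses G 3 S) (hF : IsInvariantFamily G F) (hR : IsPartition R)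
    (hR3 : #R = 3) (hFR : ∀ p ∈ F, ∃ r ∈ R, Disjoint p r) : ∀ p ∈ F, ¬ S ⊆ p := by
  obtain ⟨g, hg, hT⟩ := hS.2 R hR hR3
  intro p hp hSp
  obtain ⟨r, hr, hpr⟩ := hFR _ (hF p hp g hg)
  exact hT.not_subset hr hpr (image_subset_image hSp)

lemma card_eq_two (hS : Witnesses G 3 S) (hP : IsBlockSystem G P)
    (hnt : NontrivialSystem P) : #P = 2 := by
  obtain ⟨x, -⟩ : S.Nonempty := card_pos.mp (by rw [hS.1]; norm_num)
  obtain ⟨p, hp, -⟩ := hP.1.2.2 x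
  have one_lt : 1 < #P := by
    obtain ⟨y, hy⟩ : pᶜ.Nonempty := card_pos.mp (by rw [card_compl]; have := hnt p hp; omega)
    obtain ⟨q, hq, hyq⟩ := hP.1.2.2 y
    exact one_lt_card.mpr ⟨p, hp, q, hq, by rintro rfl; exact mem_compl.mp hy hyq⟩
  have not_two_lt : ¬ 2 < #P := fun h3 => by
    obtain ⟨R, hR, hR3, hPR⟩ := hP.1.exists_coarsening_of_two_lt_card h3
    exact hS.not_refines hP.2 hp (hnt p hp).1 (hnt p hp).2 hR hR3 hPR
  omega

lemma exists_card_inter_eq_two_one (hS : Witnesses G 3 S) (hP : IsBlockSystem G P)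
    (hnt : NontrivialSystem P) :
    ∃ p ∈ P, ∃ q ∈ P, p ≠ q ∧ #(S ∩ p) = 2 ∧ #(S ∩ q) = 1 := by
  obtain ⟨A, hA, rfl⟩ := hP.1.exists_eq_pair_compl (hS.card_eq_two hP hnt)
  have hAc : Aᶜ ∈ ({A, Aᶜ} : Finset (Finset Ω)) := by simp
  have hne : A ≠ Aᶜ := by
    obtain ⟨x, hx⟩ := hP.1.1 A hA
    exact fun h => mem_compl.mp (h ▸ hx) hx
  obtain ⟨R, hR, hR3, hPR⟩ :=
    exists_isPartition_three_disjoint_of_pair_compl (hP.1.1 A hA) (hnt Aᶜ hAc).1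
  have hsplit := hS.not_subset hP.2 hR hR3 hPR
  have hSA := hsplit A hA
  have hSAc := hsplit Aᶜ hAc
  rw [← sdiff_nonempty, ← card_pos] at hSA hSAc
  rw [sdiff_compl, inf_eq_inter] at hSAc
  have hsum := card_inter_add_card_sdiff S A
  rw [hS.1, sdiff_eq_inter_compl] at hsum
  rw [sdiff_eq_inter_compl] at hSA
  rcases (by omega : #(S ∩ A) = 2 ∧ #(S ∩ Aᶜ) = 1 ∨ #(S ∩ Aᶜ) = 2 ∧ #(S ∩ A) = 1) with h | h
  · exact ⟨A, hA, Aᶜ, hAc, hne, h⟩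
  · exact ⟨Aᶜ, hAc, A, hA, hne.symm, h⟩

lemma eq_of_four_lt_card (htrans : ∀ a b : Ω, ∃ g ∈ G, g a = b) (hS : Witnesses G 3 S)
    (hn : 4 < Fintype.card Ω) (hP : IsBlockSystem G P) (hntP : NontrivialSystem P)
    (hQ : IsBlockSystem G Q) (hntQ : NontrivialSystem Q) : P = Q := by
  obtain ⟨A, -, rfl⟩ := hP.1.exists_eq_pair_compl (hS.card_eq_two hP hntP)
  obtain ⟨B, -, rfl⟩ := hQ.1.exists_eq_pair_compl (hS.card_eq_two hQ hntQ)
  have hcardA := hP.two_mul_card_eq htrans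
  have hcardB := hQ.two_mul_card_eq htrans
  by_contra hPQ
  have hAB : A ≠ B := by rintro rfl; exact hPQ rfl
  have hABc : A ≠ Bᶜ := by rintro rfl; exact hPQ (by rw [compl_compl, pair_comm])
  obtain ⟨hR, hR3⟩ := isPartition_crossing (inter_compl_nonempty_of_card_eq (by omega) hAB)
    (inter_comm B Aᶜ ▸ inter_compl_nonempty_of_card_eq (by omega) hAB.symm)
    (compl_compl B ▸ inter_compl_nonempty_of_card_eq (by rw [card_compl]; omega) hABc)
  have hrefine : ∀ p ∈ image₂ (· ∩ ·) {A, Aᶜ} {B, Bᶜ},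
      ∃ r ∈ ({A ∩ Bᶜ, Aᶜ ∩ B, A ∩ B ∪ Aᶜ ∩ Bᶜ} : Finset (Finset Ω)), p ⊆ r := by
    simp only [mem_image₂, mem_insert, mem_singleton]
    rintro _ ⟨C, hC | hC, D, hD | hD, rfl⟩ <;> rw [hC, hD]
    · exact ⟨A ∩ B ∪ Aᶜ ∩ Bᶜ, by simp, subset_union_left⟩
    · exact ⟨A ∩ Bᶜ, by simp, subset_rfl⟩
    · exact ⟨Aᶜ ∩ B, by simp, subset_rfl⟩
    · exact ⟨A ∩ B ∪ Aᶜ ∩ Bᶜ, by simp, subset_union_right⟩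
  have hlt (D : Finset Ω) : #(A ∩ D) < Fintype.card Ω :=
    (card_le_card inter_subset_left).trans_lt (by omega)
  have hsum := card_inter_add_card_sdiff A B
  rw [sdiff_eq_inter_compl] at hsum
  have hF := IsInvariantFamily.image₂_inter hP.2 hQ.2
  rcases (by omega : 2 ≤ #(A ∩ B) ∨ 2 ≤ #(A ∩ Bᶜ)) with h | h
  · exact hS.not_refines hF (mem_image₂_of_mem (by simp) (by simp)) h (hlt B) hR hR3 hrefine
  · exact hS.not_refines hF (mem_image₂_of_mem (by simp) (by simp)) h (hlt Bᶜ) hR hR3 hrefine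

end Witnesses

theorem three_et_imprimitive_general (G : Subgroup (Equiv.Perm Ω))
    (htrans : ∀ a b : Ω, ∃ g ∈ G, g a = b)
    (S : Finset Ω) (hS : Witnesses G 3 S) :
    (∀ P : Finset (Finset Ω), IsBlockSystem G P → NontrivialSystem P → P.card = 2) ∧
    (∀ P : Finset (Finset Ω), IsBlockSystem G P → NontrivialSystem P →
      ∃ p ∈ P, ∃ q ∈ P, p ≠ q ∧ (S ∩ p).card = 2 ∧ (S ∩ q).card = 1) ∧
    (4 < Fintype.card Ω →
      ∀ P Q : Finset (Finset Ω), IsBlockSystem G P → NontrivialSystem P →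
        IsBlockSystem G Q → NontrivialSystem Q → P = Q) :=
  ⟨fun _ hP hnt => hS.card_eq_two hP hnt,
    fun _ hP hnt => hS.exists_card_inter_eq_two_one hP hnt,
    fun hn _ _ hP hntP hQ hntQ => hS.eq_of_four_lt_card htrans hn hP hntP hQ hntQ⟩

/-- A transitive imprimitive group with `3`-et has exactly two blocks in every
nontrivial block system; a witnessing `3`-set has two points in one block and one
in another; and for `n > 4` the nontrivial block system is unique. -/
theorem three_et_imprimitive (G : Subgroup (Equiv.Perm Ω))
    (htrans : ∀ a b : Ω, ∃ g ∈ G, g a = b)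
    (himprim : ∃ P : Finset (Finset Ω), IsBlockSystem G P ∧ NontrivialSystem P)
    (S : Finset Ω) (hS : Witnesses G 3 S) :
    (∀ P : Finset (Finset Ω), IsBlockSystem G P → NontrivialSystem P → P.card = 2) ∧
    (∀ P : Finset (Finset Ω), IsBlockSystem G P → NontrivialSystem P →
      ∃ p ∈ P, ∃ q ∈ P, p ≠ q ∧ (S ∩ p).card = 2 ∧ (S ∩ q).card = 1) ∧
    (4 < Fintype.card Ω →
      ∀ P Q : Finset (Finset Ω), IsBlockSystem G P → NontrivialSystem P →
        IsBlockSystem G Q → NontrivialSystem Q → P = Q) :=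
  three_et_imprimitive_general G htrans S hS
end

section
/- Let m ≥ 3 and let G = S_m wr S_2 act imprimitively on a set of size 2m with two blocks of size m. Then any 3-set containing two points from one block and one point from the other block witnesses the 3-et property for G. -/
open Finset

variable {Ω : Type*} [Fintype Ω] [DecidableEq Ω]

lemma pairext (A X s t : Finset Ω) (hsA : s ⊆ A) (htX : t ⊆ X)
    (hAX : A.card = X.card) (hst : s.card = t.card) :
    ∃ f : Ω → Ω, Set.InjOn f ↑A ∧ s.image f = t ∧ A.image f = X := by
  have hcs : (A \ s).card = (X \ t).card := by
    rw [card_sdiff_of_subset hsA, card_sdiff_of_subset htX, hAX, hst]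
  let e1 : {x // x ∈ s} ≃ {x // x ∈ t} := Finset.equivOfCardEq hst
  let e2 : {x // x ∈ A \ s} ≃ {x // x ∈ X \ t} := Finset.equivOfCardEq hcs
  classical
  set f : Ω → Ω := fun x =>
    if h : x ∈ s then (e1 ⟨x, h⟩ : Ω)
    else if h' : x ∈ A \ s then (e2 ⟨x, h'⟩ : Ω) else x with hf
  have hfs : ∀ x ∈ s, f x ∈ t := by
    intro x hx; simp only [hf, dif_pos hx]; exact (e1 ⟨x, hx⟩).2
  have hfc : ∀ x ∈ A \ s, f x ∈ X \ t := by
    intro x hx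
    have hxs : x ∉ s := (mem_sdiff.mp hx).2
    simp only [hf, dif_neg hxs, dif_pos hx]; exact (e2 ⟨x, hx⟩).2
  have hinj : Set.InjOn f ↑A := by
    intro a ha b hb hab
    simp only [Finset.mem_coe] at ha hb
    by_cases has : a ∈ s <;> by_cases hbs : b ∈ s
    · have : (⟨a, has⟩ : {x // x ∈ s}) = ⟨b, hbs⟩ := e1.injective (Subtype.ext (by
        simpa only [hf, dif_pos has, dif_pos hbs] using hab))
      exact Subtype.mk_eq_mk.mp this
    · exfalso
      have h1 := hfs a has
      have h2 := hfc b (mem_sdiff.mpr ⟨hb, hbs⟩)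
      rw [hab] at h1
      exact (mem_sdiff.mp h2).2 h1
    · exfalso
      have h1 := hfs b hbs
      have h2 := hfc a (mem_sdiff.mpr ⟨ha, has⟩)
      rw [← hab] at h1
      exact (mem_sdiff.mp h2).2 h1
    · have : (⟨a, mem_sdiff.mpr ⟨ha, has⟩⟩ : {x // x ∈ A \ s}) = ⟨b, mem_sdiff.mpr ⟨hb, hbs⟩⟩ :=
        e2.injective (Subtype.ext (by
          simpa only [hf, dif_neg has, dif_neg hbs,
            dif_pos (mem_sdiff.mpr ⟨ha, has⟩), dif_pos (mem_sdiff.mpr ⟨hb, hbs⟩)] using hab))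
      exact Subtype.mk_eq_mk.mp this
  have him_s : s.image f = t := by
    apply eq_of_subset_of_card_le
    · intro y hy
      obtain ⟨x, hx, rfl⟩ := mem_image.mp hy
      exact hfs x hx
    · rw [card_image_of_injOn (hinj.mono (by exact_mod_cast hsA))]
      omega
  have him_A : A.image f = X := by
    apply eq_of_subset_of_card_le
    · intro y hy
      obtain ⟨x, hx, rfl⟩ := mem_image.mp hy
      by_cases hxs : x ∈ s
      · exact htX (hfs x hxs)
      · exact (mem_sdiff.mp (hfc x (mem_sdiff.mpr ⟨hx, hxs⟩))).1
    · rw [card_image_of_injOn hinj]; omega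
  exact ⟨f, hinj, him_s, him_A⟩

lemma exists_T (A₁ A₂ : Finset Ω) (hdisj : Disjoint A₁ A₂)
    (huniv : A₁ ∪ A₂ = Finset.univ) (hA₁ : A₁.Nonempty) (hA₂ : A₂.Nonempty)
    (P : Finset (Finset Ω)) (hP : IsPartition P) (h3 : P.card = 3) :
    ∃ T : Finset Ω, IsTransversal T P ∧
      (((T ∩ A₁).card = 2 ∧ (T ∩ A₂).card = 1) ∨
       ((T ∩ A₁).card = 1 ∧ (T ∩ A₂).card = 2)) := by
  classical
  obtain ⟨p₁, p₂, p₃, h12, h13, h23, hPeq⟩ := card_eq_three.mp h3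
  have hp₁ : p₁ ∈ P := by rw [hPeq]; simp
  have hp₂ : p₂ ∈ P := by rw [hPeq]; simp
  have hp₃ : p₃ ∈ P := by rw [hPeq]; simp
  have hd12 : Disjoint p₁ p₂ := hP.2.1 p₁ hp₁ p₂ hp₂ h12
  have hd13 : Disjoint p₁ p₃ := hP.2.1 p₁ hp₁ p₃ hp₃ h13
  have hd23 : Disjoint p₂ p₃ := hP.2.1 p₂ hp₂ p₃ hp₃ h23
  obtain ⟨x₁, hx₁⟩ := hP.1 p₁ hp₁
  obtain ⟨x₂, hx₂⟩ := hP.1 p₂ hp₂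
  obtain ⟨x₃, hx₃⟩ := hP.1 p₃ hp₃
  have hmem : ∀ x : Ω, x ∉ A₁ → x ∈ A₂ := by
    intro x hx
    have := mem_univ x
    rw [← huniv, mem_union] at this
    tauto
  have key : ∀ y₁ y₂ y₃ : Ω, y₁ ∈ p₁ → y₂ ∈ p₂ → y₃ ∈ p₃ →
      ∀ a ∈ ({y₁, y₂, y₃} : Finset Ω), ∀ b ∈ ({y₁, y₂, y₃} : Finset Ω),
      a ∈ A₁ → b ∈ A₂ →
      ∃ T : Finset Ω, IsTransversal T P ∧
        (((T ∩ A₁).card = 2 ∧ (T ∩ A₂).card = 1) ∨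
         ((T ∩ A₁).card = 1 ∧ (T ∩ A₂).card = 2)) := by
    intro y₁ y₂ y₃ hy₁ hy₂ hy₃ a ha b hb haA hbA
    set T : Finset Ω := {y₁, y₂, y₃} with hT
    have hne12 : y₁ ≠ y₂ := fun h => disjoint_left.mp hd12 (h ▸ hy₁) hy₂
    have hne13 : y₁ ≠ y₃ := fun h => disjoint_left.mp hd13 (h ▸ hy₁) hy₃
    have hne23 : y₂ ≠ y₃ := fun h => disjoint_left.mp hd23 (h ▸ hy₂) hy₃
    have hcard : T.card = 3 := by
      rw [hT, card_insert_of_notMem (by simp [hne12, hne13]),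
        card_insert_of_notMem (by simp [hne23]), card_singleton]
    have htrans : IsTransversal T P := by
      intro p hp
      rw [hPeq, mem_insert, mem_insert, mem_singleton] at hp
      rcases hp with rfl | rfl | rfl
      · have : T ∩ p = {y₁} := by
          ext z
          simp only [hT, mem_inter, mem_insert, mem_singleton]
          constructor
          · rintro ⟨rfl | rfl | rfl, hz⟩
            · rfl
            · exact absurd hz (disjoint_right.mp hd12 hy₂)
            · exact absurd hz (disjoint_right.mp hd13 hy₃)
          · rintro rfl; exact ⟨Or.inl rfl, hy₁⟩
        rw [this, card_singleton]
      · have : T ∩ p = {y₂} := by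
          ext z
          simp only [hT, mem_inter, mem_insert, mem_singleton]
          constructor
          · rintro ⟨rfl | rfl | rfl, hz⟩
            · exact absurd hz (disjoint_left.mp hd12 hy₁)
            · rfl
            · exact absurd hz (disjoint_right.mp hd23 hy₃)
          · rintro rfl; exact ⟨Or.inr (Or.inl rfl), hy₂⟩
        rw [this, card_singleton]
      · have : T ∩ p = {y₃} := by
          ext z
          simp only [hT, mem_inter, mem_insert, mem_singleton]
          constructor
          · rintro ⟨rfl | rfl | rfl, hz⟩
            · exact absurd hz (disjoint_left.mp hd13 hy₁)
            · exact absurd hz (disjoint_left.mp hd23 hy₂)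
            · rfl
          · rintro rfl; exact ⟨Or.inr (Or.inr rfl), hy₃⟩
        rw [this, card_singleton]
    refine ⟨T, htrans, ?_⟩
    have hdT : Disjoint (T ∩ A₁) (T ∩ A₂) :=
      hdisj.mono inter_subset_right inter_subset_right
    have hunion : (T ∩ A₁) ∪ (T ∩ A₂) = T := by
      rw [← inter_union_distrib_left, huniv, inter_univ]
    have hsum : (T ∩ A₁).card + (T ∩ A₂).card = 3 := by
      rw [← card_union_of_disjoint hdT, hunion, hcard]
    have h1 : 1 ≤ (T ∩ A₁).card :=
      card_pos.mpr ⟨a, mem_inter.mpr ⟨ha, haA⟩⟩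
    have h2 : 1 ≤ (T ∩ A₂).card :=
      card_pos.mpr ⟨b, mem_inter.mpr ⟨hb, hbA⟩⟩
    omega
  by_cases h1 : x₁ ∈ A₁ <;> by_cases h2 : x₂ ∈ A₁ <;> by_cases h3' : x₃ ∈ A₁
  · -- all in A₁: replace one pick by a point of A₂
    obtain ⟨y, hy⟩ := hA₂
    obtain ⟨p, hp, hyp⟩ := hP.2.2 y
    rw [hPeq, mem_insert, mem_insert, mem_singleton] at hp
    rcases hp with rfl | rfl | rfl
    · exact key y x₂ x₃ hyp hx₂ hx₃ x₂ (by simp) y (by simp) h2 hy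
    · exact key x₁ y x₃ hx₁ hyp hx₃ x₁ (by simp) y (by simp) h1 hy
    · exact key x₁ x₂ y hx₁ hx₂ hyp x₁ (by simp) y (by simp) h1 hy
  · exact key x₁ x₂ x₃ hx₁ hx₂ hx₃ x₁ (by simp) x₃ (by simp) h1 (hmem _ h3')
  · exact key x₁ x₂ x₃ hx₁ hx₂ hx₃ x₁ (by simp) x₂ (by simp) h1 (hmem _ h2)
  · exact key x₁ x₂ x₃ hx₁ hx₂ hx₃ x₁ (by simp) x₂ (by simp) h1 (hmem _ h2)
  · exact key x₁ x₂ x₃ hx₁ hx₂ hx₃ x₂ (by simp) x₁ (by simp) h2 (hmem _ h1)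
  · exact key x₁ x₂ x₃ hx₁ hx₂ hx₃ x₂ (by simp) x₁ (by simp) h2 (hmem _ h1)
  · exact key x₁ x₂ x₃ hx₁ hx₂ hx₃ x₃ (by simp) x₁ (by simp) h3' (hmem _ h1)
  · -- all in A₂: replace one pick by a point of A₁
    obtain ⟨y, hy⟩ := hA₁
    obtain ⟨p, hp, hyp⟩ := hP.2.2 y
    rw [hPeq, mem_insert, mem_insert, mem_singleton] at hp
    rcases hp with rfl | rfl | rfl
    · exact key y x₂ x₃ hyp hx₂ hx₃ y (by simp) x₂ (by simp) hy (hmem _ h2)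
    · exact key x₁ y x₃ hx₁ hyp hx₃ y (by simp) x₁ (by simp) hy (hmem _ h1)
    · exact key x₁ x₂ y hx₁ hx₂ hyp y (by simp) x₁ (by simp) hy (hmem _ h1)

lemma build_perm (A₁ A₂ X Y s₁ s₂ t₁ t₂ : Finset Ω)
    (hdisj : Disjoint A₁ A₂) (huniv : A₁ ∪ A₂ = Finset.univ)
    (hXY : Disjoint X Y)
    (h1 : A₁.card = X.card) (h2 : A₂.card = Y.card)
    (hs₁ : s₁ ⊆ A₁) (hs₂ : s₂ ⊆ A₂) (ht₁ : t₁ ⊆ X) (ht₂ : t₂ ⊆ Y)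
    (hc₁ : s₁.card = t₁.card) (hc₂ : s₂.card = t₂.card) :
    ∃ g : Equiv.Perm Ω, A₁.image ⇑g = X ∧ A₂.image ⇑g = Y ∧
      (s₁ ∪ s₂).image ⇑g = t₁ ∪ t₂ := by
  obtain ⟨f₁, hinj₁, hfs₁, hfA₁⟩ := pairext A₁ X s₁ t₁ hs₁ ht₁ h1 hc₁
  obtain ⟨f₂, hinj₂, hfs₂, hfA₂⟩ := pairext A₂ Y s₂ t₂ hs₂ ht₂ h2 hc₂
  classical
  set f : Ω → Ω := fun x => if x ∈ A₁ then f₁ x else f₂ x with hf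
  have hmem : ∀ x : Ω, x ∉ A₁ → x ∈ A₂ := by
    intro x hx
    have := mem_univ x
    rw [← huniv, mem_union] at this
    tauto
  have hfX : ∀ x ∈ A₁, f x ∈ X := by
    intro x hx
    simp only [hf, if_pos hx]
    exact hfA₁ ▸ mem_image_of_mem f₁ hx
  have hfY : ∀ x : Ω, x ∉ A₁ → f x ∈ Y := by
    intro x hx
    simp only [hf, if_neg hx]
    exact hfA₂ ▸ mem_image_of_mem f₂ (hmem x hx)
  have hinj : Function.Injective f := by
    intro a b hab
    by_cases ha : a ∈ A₁ <;> by_cases hb : b ∈ A₁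
    · have : f₁ a = f₁ b := by simpa only [hf, if_pos ha, if_pos hb] using hab
      exact hinj₁ (by exact_mod_cast ha) (by exact_mod_cast hb) this
    · exact absurd (hab ▸ hfX a ha) (disjoint_left.mp hXY.symm (hfY b hb))
    · exact absurd (hab ▸ hfY a ha) (disjoint_left.mp hXY (hfX b hb))
    · have : f₂ a = f₂ b := by simpa only [hf, if_neg ha, if_neg hb] using hab
      exact hinj₂ (by exact_mod_cast hmem a ha) (by exact_mod_cast hmem b hb) this
  have hbij : Function.Bijective f := Finite.injective_iff_bijective.mp hinj
  refine ⟨Equiv.ofBijective f hbij, ?_, ?_, ?_⟩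
  · rw [show ⇑(Equiv.ofBijective f hbij) = f from rfl]
    rw [← hfA₁]
    apply image_congr
    intro x hx
    simp only [hf, if_pos (Finset.mem_coe.mp hx)]
  · rw [show ⇑(Equiv.ofBijective f hbij) = f from rfl, ← hfA₂]
    apply image_congr
    intro x hx
    have : x ∉ A₁ := disjoint_right.mp hdisj (Finset.mem_coe.mp hx)
    simp only [hf, if_neg this]
  · rw [show ⇑(Equiv.ofBijective f hbij) = f from rfl, image_union, ← hfs₁, ← hfs₂]
    congr 1
    · apply image_congr; intro x hx; simp only [hf, if_pos (hs₁ (Finset.mem_coe.mp hx))]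
    · apply image_congr; intro x hx
      simp only [hf, if_neg (disjoint_right.mp hdisj (hs₂ (Finset.mem_coe.mp hx)))]

/-- For `G = S_m ≀ S_2` acting imprimitively with two blocks `A₁, A₂` of size
`m ≥ 3`, any `3`-set with two points in one block and one in the other witnesses
the `3`-et property. -/
theorem three_et_wreath_imprimitive (m : ℕ) (hm : 3 ≤ m)
    (A₁ A₂ : Finset Ω) (hdisj : Disjoint A₁ A₂) (huniv : A₁ ∪ A₂ = Finset.univ)
    (hA₁ : A₁.card = m) (hA₂ : A₂.card = m)
    (S : Finset Ω)
    (hS : ((S ∩ A₁).card = 2 ∧ (S ∩ A₂).card = 1) ∨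
          ((S ∩ A₂).card = 2 ∧ (S ∩ A₁).card = 1)) :
    ∀ P : Finset (Finset Ω), IsPartition P → P.card = 3 →
      ∃ g : Equiv.Perm Ω,
        ((A₁.image ⇑g = A₁ ∧ A₂.image ⇑g = A₂) ∨
         (A₁.image ⇑g = A₂ ∧ A₂.image ⇑g = A₁)) ∧
        IsTransversal (S.image ⇑g) P := by
  intro P hP hP3
  have hA₁ne : A₁.Nonempty := card_pos.mp (by omega)
  have hA₂ne : A₂.Nonempty := card_pos.mp (by omega)
  have hcardeq : A₁.card = A₂.card := by rw [hA₁, hA₂]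
  obtain ⟨T, hTtrans, hTcase⟩ := exists_T A₁ A₂ hdisj huniv hA₁ne hA₂ne P hP hP3
  have hSd : (S ∩ A₁) ∪ (S ∩ A₂) = S := by
    rw [← inter_union_distrib_left, huniv, inter_univ]
  have hTd : (T ∩ A₁) ∪ (T ∩ A₂) = T := by
    rw [← inter_union_distrib_left, huniv, inter_univ]
  rcases hS with ⟨hS1, hS2⟩ | ⟨hS2, hS1⟩ <;> rcases hTcase with ⟨hT1, hT2⟩ | ⟨hT1, hT2⟩
  · obtain ⟨g, hg₁, hg₂, hgS⟩ := build_perm A₁ A₂ A₁ A₂ (S ∩ A₁) (S ∩ A₂) (T ∩ A₁) (T ∩ A₂)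
      hdisj huniv hdisj rfl rfl inter_subset_right inter_subset_right
      inter_subset_right inter_subset_right (by omega) (by omega)
    rw [hSd, hTd] at hgS
    exact ⟨g, Or.inl ⟨hg₁, hg₂⟩, hgS ▸ hTtrans⟩
  · obtain ⟨g, hg₁, hg₂, hgS⟩ := build_perm A₁ A₂ A₂ A₁ (S ∩ A₁) (S ∩ A₂) (T ∩ A₂) (T ∩ A₁)
      hdisj huniv hdisj.symm hcardeq hcardeq.symm inter_subset_right inter_subset_right
      inter_subset_right inter_subset_right (by omega) (by omega)
    rw [hSd, union_comm, hTd] at hgS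
    exact ⟨g, Or.inr ⟨hg₁, hg₂⟩, hgS ▸ hTtrans⟩
  · obtain ⟨g, hg₁, hg₂, hgS⟩ := build_perm A₁ A₂ A₂ A₁ (S ∩ A₁) (S ∩ A₂) (T ∩ A₂) (T ∩ A₁)
      hdisj huniv hdisj.symm hcardeq hcardeq.symm inter_subset_right inter_subset_right
      inter_subset_right inter_subset_right (by omega) (by omega)
    rw [hSd, union_comm, hTd] at hgS
    exact ⟨g, Or.inr ⟨hg₁, hg₂⟩, hgS ▸ hTtrans⟩
  · obtain ⟨g, hg₁, hg₂, hgS⟩ := build_perm A₁ A₂ A₁ A₂ (S ∩ A₁) (S ∩ A₂) (T ∩ A₁) (T ∩ A₂)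
      hdisj huniv hdisj rfl rfl inter_subset_right inter_subset_right
      inter_subset_right inter_subset_right (by omega) (by omega)
    rw [hSd, hTd] at hgS
    exact ⟨g, Or.inl ⟨hg₁, hg₂⟩, hgS ▸ hTtrans⟩
end

section
/- Let n ≥ 4 and let G = S_n wr S_2 act in product action on the n × n grid {1,…,n} × {1,…,n}. Then the 3-set S = {(1,1),(1,2),(2,3)} witnesses the 3-et property for G, i.e., every partition of the grid into 3 nonempty parts admits a G-image of S as a transversal. -/
open Finset

variable {Ω : Type*} [Fintype Ω] [DecidableEq Ω]

/-!
Call three cells a *shape* if, possibly after transposing the grid, two of them share a row, the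
third lies in another row, and their three columns are distinct. The shapes are exactly the images
of `S` under the product action, so it suffices to find a *rainbow* shape, one meeting all three
parts.

Two cells of different parts always share a line: for `(r, c) ∈ p` and `(r', c') ∈ q`, the cell
`(r, c')` shares a row with the first and a column with the second. Given such a pair in row `r`,
each cell of the third part either completes a rainbow shape or lies off row `r` in one of the
pair's two columns (if row `r` meets all three parts, any cell off that row and off their columns
completes one). Applying this dichotomy to a row pair and then to a column pair confines the third
part to two columns and the second part to two rows, and cells outside those lines then complete a
rainbow shape. The spare rows and columns exist because `n ≥ 4`.
-/

open Function

lemma exists_ne_ne_ne {α : Type*} [Fintype α] (hα : 4 ≤ Fintype.card α) (a b c : α) :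
    ∃ x, x ≠ a ∧ x ≠ b ∧ x ≠ c := by
  classical
  obtain ⟨x, -, hx⟩ := Finset.exists_mem_notMem_of_card_lt_card
    (s := {a, b, c}) (t := Finset.univ)
    (by rw [Finset.card_univ]; exact Finset.card_le_three.trans_lt (by omega))
  exact ⟨x, by simpa [not_or] using hx⟩

structure IsTripartition {β : Type*} (p q s : Set β) : Prop where
  nonempty₁ : p.Nonempty
  nonempty₂ : q.Nonempty
  nonempty₃ : s.Nonempty
  disjoint₁₂ : Disjoint p q
  disjoint₁₃ : Disjoint p s
  disjoint₂₃ : Disjoint q s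
  cover : ∀ x, x ∈ p ∨ x ∈ q ∨ x ∈ s

namespace IsTripartition

variable {β γ : Type*} {p q s : Set β}

lemma swap₁₂ (h : IsTripartition p q s) : IsTripartition q p s where
  nonempty₁ := h.nonempty₂
  nonempty₂ := h.nonempty₁
  nonempty₃ := h.nonempty₃
  disjoint₁₂ := h.disjoint₁₂.symm
  disjoint₁₃ := h.disjoint₂₃
  disjoint₂₃ := h.disjoint₁₃
  cover x := by have := h.cover x; tauto

lemma swap₂₃ (h : IsTripartition p q s) : IsTripartition p s q where
  nonempty₁ := h.nonempty₁
  nonempty₂ := h.nonempty₃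
  nonempty₃ := h.nonempty₂
  disjoint₁₂ := h.disjoint₁₃
  disjoint₁₃ := h.disjoint₁₂
  disjoint₂₃ := h.disjoint₂₃.symm
  cover x := by have := h.cover x; tauto

lemma preimage (h : IsTripartition p q s) {f : γ → β} (hf : Surjective f) :
    IsTripartition (f ⁻¹' p) (f ⁻¹' q) (f ⁻¹' s) where
  nonempty₁ := h.nonempty₁.preimage hf
  nonempty₂ := h.nonempty₂.preimage hf
  nonempty₃ := h.nonempty₃.preimage hf
  disjoint₁₂ := h.disjoint₁₂.preimage f
  disjoint₁₃ := h.disjoint₁₃.preimage f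
  disjoint₂₃ := h.disjoint₂₃.preimage f
  cover x := h.cover (f x)

end IsTripartition

section Shapes

variable {α : Type*} [DecidableEq α]

def IsRowShape (T : Finset (α × α)) : Prop :=
  ∃ r r' c₁ c₂ c₃, r ≠ r' ∧ c₁ ≠ c₂ ∧ c₁ ≠ c₃ ∧ c₂ ≠ c₃ ∧ T = {(r, c₁), (r, c₂), (r', c₃)}

def IsShape (T : Finset (α × α)) : Prop :=
  IsRowShape T ∨ IsRowShape (T.image Prod.swap)

lemma IsShape.image_swap {T : Finset (α × α)} (h : IsShape T) : IsShape (T.image Prod.swap) := by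
  rcases h with h | h
  · right
    rwa [Finset.image_image, Prod.swap_swap_eq, Finset.image_id]
  · exact Or.inl h

def HasRainbowShape (p q s : Set (α × α)) : Prop :=
  ∃ u ∈ p, ∃ v ∈ q, ∃ w ∈ s, IsShape {u, v, w}

namespace HasRainbowShape

variable {p q s : Set (α × α)}

lemma swap₁₂ (h : HasRainbowShape p q s) : HasRainbowShape q p s := by
  obtain ⟨u, hu, v, hv, w, hw, h⟩ := h
  exact ⟨v, hv, u, hu, w, hw, by rwa [Finset.insert_comm]⟩

lemma swap₂₃ (h : HasRainbowShape p q s) : HasRainbowShape p s q := by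
  obtain ⟨u, hu, v, hv, w, hw, h⟩ := h
  exact ⟨u, hu, w, hw, v, hv, by rwa [Finset.pair_comm]⟩

lemma of_preimage_swap
    (h : HasRainbowShape (Prod.swap ⁻¹' p) (Prod.swap ⁻¹' q) (Prod.swap ⁻¹' s)) :
    HasRainbowShape p q s := by
  obtain ⟨u, hu, v, hv, w, hw, h⟩ := h
  exact ⟨u.swap, hu, v.swap, hv, w.swap, hw, by simpa using h.image_swap⟩

end HasRainbowShape

variable {p q s : Set (α × α)} {r r' r'' c₁ c₂ c₃ : α}

lemma hasRainbowShape_of_row (h₁ : (r, c₁) ∈ p) (h₂ : (r, c₂) ∈ q) (h₃ : (r', c₃) ∈ s)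
    (hr : r ≠ r') (h₁₂ : c₁ ≠ c₂) (h₁₃ : c₁ ≠ c₃) (h₂₃ : c₂ ≠ c₃) : HasRainbowShape p q s :=
  ⟨_, h₁, _, h₂, _, h₃, Or.inl ⟨r, r', c₁, c₂, c₃, hr, h₁₂, h₁₃, h₂₃, rfl⟩⟩

lemma hasRainbowShape_of_col (h₁ : (r, c₁) ∈ p) (h₂ : (r', c₁) ∈ q) (h₃ : (r'', c₂) ∈ s)
    (hc : c₁ ≠ c₂) (hrr' : r ≠ r') (hrr'' : r ≠ r'') (hr'r'' : r' ≠ r'') :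
    HasRainbowShape p q s :=
  HasRainbowShape.of_preimage_swap
    (hasRainbowShape_of_row (p := Prod.swap ⁻¹' p) (q := Prod.swap ⁻¹' q) (s := Prod.swap ⁻¹' s)
      h₁ h₂ h₃ hc hrr' hrr'' hr'r'')


namespace IsTripartition

variable [Fintype α] (hα : 4 ≤ Fintype.card α)
include hα

lemma hasRainbowShape_of_row_three (hP : IsTripartition p q s)
    (h₁ : (r, c₁) ∈ p) (h₂ : (r, c₂) ∈ q) (h₃ : (r, c₃) ∈ s) : HasRainbowShape p q s := by
  have h₁₂ : c₁ ≠ c₂ := ne_of_apply_ne (Prod.mk r) (hP.disjoint₁₂.ne_of_mem h₁ h₂)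
  have h₁₃ : c₁ ≠ c₃ := ne_of_apply_ne (Prod.mk r) (hP.disjoint₁₃.ne_of_mem h₁ h₃)
  have h₂₃ : c₂ ≠ c₃ := ne_of_apply_ne (Prod.mk r) (hP.disjoint₂₃.ne_of_mem h₂ h₃)
  obtain ⟨r', hr', -⟩ := exists_ne_ne_ne hα r r r
  obtain ⟨c, hc₁, hc₂, hc₃⟩ := exists_ne_ne_ne hα c₁ c₂ c₃
  rcases hP.cover (r', c) with h | h | h
  · exact (hasRainbowShape_of_row h₂ h₃ h hr'.symm h₂₃ hc₂.symm hc₃.symm).swap₂₃.swap₁₂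
  · exact (hasRainbowShape_of_row h₁ h₃ h hr'.symm h₁₃ hc₁.symm hc₃.symm).swap₂₃
  · exact hasRainbowShape_of_row h₁ h₂ h hr'.symm h₁₂ hc₁.symm hc₂.symm

lemma hasRainbowShape_or_of_row_pair (hP : IsTripartition p q s)
    (h₁ : (r, c₁) ∈ p) (h₂ : (r, c₂) ∈ q) {x y : α} (h : (x, y) ∈ s) :
    HasRainbowShape p q s ∨ x ≠ r ∧ (y = c₁ ∨ y = c₂) := by
  by_cases hx : x = r
  · subst hx
    exact Or.inl (hP.hasRainbowShape_of_row_three hα h₁ h₂ h)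
  by_cases hy : y = c₁ ∨ y = c₂
  · exact Or.inr ⟨hx, hy⟩
  push Not at hy
  exact Or.inl (hasRainbowShape_of_row h₁ h₂ h (Ne.symm hx)
    (ne_of_apply_ne (Prod.mk r) (hP.disjoint₁₂.ne_of_mem h₁ h₂)) (Ne.symm hy.1) (Ne.symm hy.2))

lemma hasRainbowShape_of_corner (hP : IsTripartition p q s)
    (h₁ : (r, c₁) ∈ p) (h₂ : (r, c₂) ∈ q) (h₃ : (r', c₁) ∈ s) : HasRainbowShape p q s := by
  by_contra hR
  have hs {x y : α} (h : (x, y) ∈ s) : x ≠ r ∧ (y = c₁ ∨ y = c₂) :=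
    (hP.hasRainbowShape_or_of_row_pair hα h₁ h₂ h).resolve_left hR
  -- the same dichotomy for the column pair `(r, c₁) ∈ p`, `(r', c₁) ∈ s`, read in the transpose
  have hq {x y : α} (h : (x, y) ∈ q) : y ≠ c₁ ∧ (x = r ∨ x = r') :=
    (((hP.swap₂₃.preimage Prod.swap_surjective).hasRainbowShape_or_of_row_pair hα
      (r := c₁) (c₁ := r) (c₂ := r') h₁ h₃ (x := y) (y := x) h).resolve_left
      fun h => hR h.of_preimage_swap.swap₂₃)
  have hc : c₁ ≠ c₂ := ne_of_apply_ne (Prod.mk r) (hP.disjoint₁₂.ne_of_mem h₁ h₂)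
  have hr : r' ≠ r := (hs h₃).1
  obtain ⟨a, har, har', -⟩ := exists_ne_ne_ne hα r r' r'
  obtain ⟨b, hbr, hbr', hba⟩ := exists_ne_ne_ne hα r r' a
  obtain ⟨d, hd₁, hd₂, -⟩ := exists_ne_ne_ne hα c₁ c₂ c₂
  have hbd : (b, d) ∈ p := by
    rcases hP.cover (b, d) with h | h | h
    · exact h
    · exact ((hq h).2.elim hbr hbr').elim
    · exact ((hs h).2.elim hd₁ hd₂).elim
  rcases hP.cover (a, c₂) with h | h | h
  · exact hR (hasRainbowShape_of_col h h₂ h₃ hc.symm har har' hr.symm)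
  · exact (hq h).2.elim har har'
  · exact hR (hasRainbowShape_of_col h₂ h hbd hd₂.symm (Ne.symm har) (Ne.symm hbr)
      hba.symm).swap₂₃.swap₁₂

lemma hasRainbowShape_of_row_pair (hP : IsTripartition p q s)
    (h₁ : (r, c₁) ∈ p) (h₂ : (r, c₂) ∈ q) : HasRainbowShape p q s := by
  obtain ⟨⟨x, y⟩, h⟩ := hP.nonempty₃
  rcases hP.hasRainbowShape_or_of_row_pair hα h₁ h₂ h with hR | ⟨-, rfl | rfl⟩
  · exact hR
  · exact hP.hasRainbowShape_of_corner hα h₁ h₂ h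
  · exact (hP.swap₁₂.hasRainbowShape_of_corner hα h₂ h₁ h).swap₁₂

theorem hasRainbowShape (hP : IsTripartition p q s) : HasRainbowShape p q s := by
  obtain ⟨⟨r, c⟩, hp⟩ := hP.nonempty₁
  obtain ⟨⟨r', c'⟩, hq⟩ := hP.nonempty₂
  rcases hP.cover (r, c') with h | h | h
  · exact ((hP.preimage Prod.swap_surjective).hasRainbowShape_of_row_pair hα
      (r := c') (c₁ := r) (c₂ := r') h hq).of_preimage_swap
  · exact hP.hasRainbowShape_of_row_pair hα hp h
  · exact (hP.swap₂₃.hasRainbowShape_of_row_pair hα hp h).swap₂₃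

end IsTripartition

end Shapes

section ProductAction

variable {α : Type*} [DecidableEq α]

def IsProductActionPerm (g : Equiv.Perm (α × α)) : Prop :=
  (∃ σ τ : Equiv.Perm α, ∀ p, g p = (σ p.1, τ p.2)) ∨
  (∃ σ τ : Equiv.Perm α, ∀ p, g p = (τ p.2, σ p.1))

def IsProductActionImage (S T : Finset (α × α)) : Prop :=
  ∃ g, IsProductActionPerm g ∧ S.image g = T

variable {S T : Finset (α × α)}

lemma IsProductActionImage.image_swap (h : IsProductActionImage S T) :
    IsProductActionImage S (T.image Prod.swap) := by
  obtain ⟨g, ⟨σ, τ, hg⟩ | ⟨σ, τ, hg⟩, rfl⟩ := h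
  all_goals refine ⟨g.trans (Equiv.prodComm α α), ?_, by simp [Finset.image_image, comp_def]⟩
  · exact Or.inr ⟨σ, τ, fun p => by simp [hg]⟩
  · exact Or.inl ⟨σ, τ, fun p => by simp [hg]⟩

variable {a b c : α} (hab : a ≠ b) (hac : a ≠ c) (hbc : b ≠ c)
include hab hac hbc

lemma IsRowShape.isProductActionImage (h : IsRowShape T) :
    IsProductActionImage {(a, a), (a, b), (b, c)} T := by
  obtain ⟨r, r', c₁, c₂, c₃, hr, h₁₂, h₁₃, h₂₃, rfl⟩ := h
  obtain ⟨σ, hσ⟩ := Equiv.Perm.exists_extending_pair ![a, b] ![r, r']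
    (by simp [Injective, Fin.forall_fin_succ, hab, hab.symm])
    (by simp [Injective, Fin.forall_fin_succ, hr, hr.symm])
  obtain ⟨τ, hτ⟩ := Equiv.Perm.exists_extending_pair ![a, b, c] ![c₁, c₂, c₃]
    (by simp [Injective, Fin.forall_fin_succ, hab, hac, hbc, hab.symm, hac.symm, hbc.symm])
    (by simp [Injective, Fin.forall_fin_succ, h₁₂, h₁₃, h₂₃, h₁₂.symm, h₁₃.symm, h₂₃.symm])
  refine ⟨σ.prodCongr τ, Or.inl ⟨σ, τ, fun _ => rfl⟩, ?_⟩
  have hσa : σ a = r := hσ 0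
  have hσb : σ b = r' := hσ 1
  have hτa : τ a = c₁ := hτ 0
  have hτb : τ b = c₂ := hτ 1
  have hτc : τ c = c₃ := hτ 2
  simp [hσa, hσb, hτa, hτb, hτc]

lemma IsShape.isProductActionImage (h : IsShape T) :
    IsProductActionImage {(a, a), (a, b), (b, c)} T := by
  rcases h with h | h
  · exact h.isProductActionImage hab hac hbc
  · simpa [Finset.image_image] using (h.isProductActionImage hab hac hbc).image_swap

end ProductAction

lemma IsPartition.isTripartition {β : Type*} [Fintype β] [DecidableEq β] {p q s : Finset β}
    (hP : IsPartition {p, q, s}) (hpq : p ≠ q) (hps : p ≠ s) (hqs : q ≠ s) :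
    IsTripartition (p : Set β) q s := by
  obtain ⟨hne, hdisj, hcov⟩ := hP
  refine ⟨Finset.coe_nonempty.2 (hne p (by simp)), Finset.coe_nonempty.2 (hne q (by simp)),
    Finset.coe_nonempty.2 (hne s (by simp)),
    Finset.disjoint_coe.2 (hdisj p (by simp) q (by simp) hpq),
    Finset.disjoint_coe.2 (hdisj p (by simp) s (by simp) hps),
    Finset.disjoint_coe.2 (hdisj q (by simp) s (by simp) hqs), fun x => ?_⟩
  obtain ⟨t, ht, hx⟩ := hcov x
  simp only [Finset.mem_insert, Finset.mem_singleton] at ht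
  rcases ht with rfl | rfl | rfl <;> simp [hx]

lemma IsTripartition.isTransversal {β : Type*} [DecidableEq β] {p q s : Finset β}
    (hP : IsTripartition (p : Set β) q s) {u v w : β} (hu : u ∈ p) (hv : v ∈ q) (hw : w ∈ s) :
    IsTransversal {u, v, w} {p, q, s} := by
  have hu₂ : u ∉ q := hP.disjoint₁₂.notMem_of_mem_left hu
  have hu₃ : u ∉ s := hP.disjoint₁₃.notMem_of_mem_left hu
  have hv₁ : v ∉ p := hP.disjoint₁₂.notMem_of_mem_right hv
  have hv₃ : v ∉ s := hP.disjoint₂₃.notMem_of_mem_left hv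
  have hw₁ : w ∉ p := hP.disjoint₁₃.notMem_of_mem_right hw
  have hw₂ : w ∉ q := hP.disjoint₂₃.notMem_of_mem_right hw
  simp [IsTransversal, Finset.insert_inter_of_mem, Finset.insert_inter_of_notMem,
    Finset.singleton_inter_of_mem, Finset.singleton_inter_of_notMem, *]

/-- For `n ≥ 4`, the `3`-set `S = {(1,1),(1,2),(2,3)}` witnesses the `3`-et
property for `S_n ≀ S_2` in its product action on the `n × n` grid. -/
theorem three_et_product_action (n : ℕ) (hn : 4 ≤ n)
    (S : Finset (Fin n × Fin n))
    (hSdef : S = {(⟨0, by omega⟩, ⟨0, by omega⟩),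
                  (⟨0, by omega⟩, ⟨1, by omega⟩),
                  (⟨1, by omega⟩, ⟨2, by omega⟩)}) :
    ∀ P : Finset (Finset (Fin n × Fin n)), IsPartition P → P.card = 3 →
      ∃ g : Equiv.Perm (Fin n × Fin n),
        ((∃ σ τ : Equiv.Perm (Fin n), ∀ p, g p = (σ p.1, τ p.2)) ∨
         (∃ σ τ : Equiv.Perm (Fin n), ∀ p, g p = (τ p.2, σ p.1))) ∧
        IsTransversal (S.image ⇑g) P := by
  intro P hP hP₃
  obtain ⟨p, q, s, hpq, hps, hqs, rfl⟩ := Finset.card_eq_three.1 hP₃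
  have hT := hP.isTripartition hpq hps hqs
  obtain ⟨u, hu, v, hv, w, hw, hshape⟩ := hT.hasRainbowShape (by simpa using hn)
  obtain ⟨g, hg, himage⟩ := hshape.isProductActionImage
    (a := ⟨0, by omega⟩) (b := ⟨1, by omega⟩) (c := ⟨2, by omega⟩)
    (by simp [Fin.ext_iff]) (by simp [Fin.ext_iff]) (by simp [Fin.ext_iff])
  exact ⟨g, hg, hSdef ▸ himage ▸ hT.isTransversal hu hv hw⟩
end

section
/- Let k ≥ 5 and let G be a transitive permutation group of degree n with the k-et property, where n > R(k-1, k-1) (the diagonal Ramsey number). Then G is 2-homogeneous, i.e., transitive on 2-subsets. -/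
open Finset

variable {Ω : Type*} [Fintype Ω] [DecidableEq Ω]

/-!
Colour the pairs of points by whether they lie in the `G`-orbit of the pair `A`. If `G` is not
`2`-homogeneous both colours occur, and Ramsey's theorem gives a monochromatic `(k-1)`-set `M`;
let `Γ` be the graph of the other colour, a nonempty `G`-invariant graph in which `M` is
independent. The `k`-et property puts `M` inside an image `g S`, which has a single point outside
`M`, so two edges of `Γ` inside `g S` always meet; and it moves any four points into `g S`, so any
two edges of `Γ` meet. But in a vertex-transitive graph on at least five vertices with pairwise
meeting edges some vertex has three neighbours, hence lies on every edge, and then so does each of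
its images under `G`, which is absurd.
-/

namespace SimpleGraph

variable {α : Type*} (Γ : SimpleGraph α)

def EdgesPairwiseIntersect : Prop :=
  ∀ ⦃x y z w : α⦄, Γ.Adj x y → Γ.Adj z w → x = z ∨ x = w ∨ y = z ∨ y = w

def IsInvariant (G : Subgroup (Equiv.Perm α)) : Prop :=
  ∀ g ∈ G, ∀ ⦃x y : α⦄, Γ.Adj x y → Γ.Adj (g x) (g y)

variable {Γ}

lemma IsInvariant.compl {G : Subgroup (Equiv.Perm α)} (h : Γ.IsInvariant G) :
    Γᶜ.IsInvariant G := by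
  rintro g hg x y ⟨hxy, hn⟩
  refine ⟨g.injective.ne hxy, fun hadj => hn ?_⟩
  simpa using h g⁻¹ (inv_mem hg) hadj

lemma EdgesPairwiseIntersect.exists_two_lt_ncard_neighborSet [Finite α]
    (hΓ : Γ.EdgesPairwiseIntersect) (hcov : ∀ v, ∃ w, Γ.Adj v w) {x y : α} (hxy : Γ.Adj x y)
    (hα : 5 ≤ Nat.card α) : ∃ c, 2 < (Γ.neighborSet c).ncard := by
  have hunion : Set.univ = Γ.neighborSet x ∪ Γ.neighborSet y := by
    refine (Set.eq_univ_of_forall fun v => ?_).symm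
    obtain ⟨w, hvw⟩ := hcov v
    have := hΓ hvw hxy
    have := hΓ hxy hvw
    simp only [Set.mem_union, mem_neighborSet]
    grind [Adj.symm, Adj.ne]
  have := Set.ncard_union_le (Γ.neighborSet x) (Γ.neighborSet y)
  rw [← hunion, Set.ncard_univ] at this
  by_contra! h
  have := h x
  have := h y
  omega

lemma EdgesPairwiseIntersect.mem_of_two_lt_ncard_neighborSet [Finite α]
    (hΓ : Γ.EdgesPairwiseIntersect) {c : α} (hc : 2 < (Γ.neighborSet c).ncard)
    {u v : α} (huv : Γ.Adj u v) : u = c ∨ v = c := by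
  obtain ⟨q, r, t, hq, hr, ht, hqr, hqt, hrt⟩ := (Set.two_lt_ncard_iff (Set.toFinite _)).mp hc
  have := hΓ huv hq
  have := hΓ huv hr
  have := hΓ huv ht
  -- an edge avoiding `c` would need an endpoint in each of `{q}`, `{r}`, `{t}`
  grind

lemma not_edgesPairwiseIntersect [Finite α] {G : Subgroup (Equiv.Perm α)}
    (htrans : ∀ a b : α, ∃ g ∈ G, g a = b) (hinv : Γ.IsInvariant G) {x y : α}
    (hxy : Γ.Adj x y) (hα : 5 ≤ Nat.card α) : ¬ Γ.EdgesPairwiseIntersect := by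
  intro hΓ
  have hcov : ∀ v, ∃ w, Γ.Adj v w := fun v => by
    obtain ⟨g, hg, rfl⟩ := htrans x v
    exact ⟨g y, hinv g hg hxy⟩
  obtain ⟨c, hc⟩ := hΓ.exists_two_lt_ncard_neighborSet hcov hxy hα
  obtain ⟨q, r, -, hq, hr, -, hqr, -, -⟩ := (Set.two_lt_ncard_iff (Set.toFinite _)).mp hc
  obtain ⟨g, hg, rfl⟩ := htrans c q
  -- every edge contains `c`, hence also its image `g c`, which is adjacent to `c`
  have hgc : ∀ ⦃u v⦄, Γ.Adj u v → u = g c ∨ v = g c := fun u v huv => by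
    have := hΓ.mem_of_two_lt_ncard_neighborSet hc (hinv g⁻¹ (inv_mem hg) huv)
    simpa only [Equiv.Perm.inv_eq_iff_eq] using this
  rcases hgc hr with h | h
  · exact hq.ne h
  · exact hqr h.symm

lemma IsIndepSet.eq_or_eq_of_adj_of_card_sdiff_le_one [DecidableEq α] {M U : Finset α}
    (hM : Γ.IsIndepSet M) (hU : (U \ M).card ≤ 1) {x y z w : α} (hx : x ∈ U) (hy : y ∈ U)
    (hz : z ∈ U) (hw : w ∈ U) (hxy : Γ.Adj x y) (hzw : Γ.Adj z w) :
    x = z ∨ x = w ∨ y = z ∨ y = w := by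
  have houtside : ∀ ⦃p q⦄, p ∈ U → q ∈ U → Γ.Adj p q → ∃ r ∈ U \ M, r = p ∨ r = q := by
    intro p q hp hq hpq
    by_contra! h
    exact hM (by simpa [hp] using h p) (by simpa [hq] using h q) hpq.ne hpq
  obtain ⟨r, hr, hrxy⟩ := houtside hx hy hxy
  obtain ⟨r', hr', hrzw⟩ := houtside hz hw hzw
  have := card_le_one.mp hU r hr r' hr'
  grind

variable [DecidableEq α]

def orbitGraph (G : Subgroup (Equiv.Perm α)) (A : Finset α) : SimpleGraph α :=
  fromRel fun x y => ∃ g ∈ G, A.image g = {x, y}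

lemma orbitGraph_adj {G : Subgroup (Equiv.Perm α)} {A : Finset α} {x y : α} :
    (orbitGraph G A).Adj x y ↔ x ≠ y ∧ ∃ g ∈ G, A.image g = {x, y} := by
  simp [orbitGraph, pair_comm y x]

lemma orbitGraph_isInvariant (G : Subgroup (Equiv.Perm α)) (A : Finset α) :
    (orbitGraph G A).IsInvariant G := by
  intro g hg x y
  simp only [orbitGraph_adj]
  rintro ⟨hxy, h, hh, hA⟩
  refine ⟨g.injective.ne hxy, g * h, mul_mem hg hh, ?_⟩
  rw [Equiv.Perm.coe_mul, ← image_image, hA, image_insert, image_singleton]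

end SimpleGraph

lemma card_insert_compl_image_singleton_s12 (T : Finset Ω) :
    (insert Tᶜ (T.image fun t => ({t} : Finset Ω))).card = T.card + 1 := by
  rw [card_insert_of_notMem, card_image_of_injective _ singleton_injective]
  rintro h
  obtain ⟨t, ht, hTt⟩ := mem_image.mp h
  exact mem_compl.mp (hTt ▸ mem_singleton_self t) ht

lemma isPartition_insert_compl_image_singleton_s12 {T : Finset Ω} (hT : Tᶜ.Nonempty) :
    IsPartition (insert Tᶜ (T.image fun t => ({t} : Finset Ω))) := by
  refine ⟨?_, ?_, fun x => ?_⟩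
  · simp only [mem_insert, mem_image]
    rintro p (rfl | ⟨t, -, rfl⟩)
    · exact hT
    · exact singleton_nonempty t
  · simp only [mem_insert, mem_image]
    rintro p (rfl | ⟨t, ht, rfl⟩) q (rfl | ⟨t', ht', rfl⟩) hpq
    · exact absurd rfl hpq
    · simpa using ht'
    · simpa using ht
    · simpa [eq_comm] using hpq
  · by_cases hx : x ∈ T
    · exact ⟨{x}, mem_insert_of_mem (mem_image_of_mem _ hx), mem_singleton_self x⟩
    · exact ⟨Tᶜ, mem_insert_self _ _, mem_compl.mpr hx⟩

variable {G : Subgroup (Equiv.Perm Ω)} {k : ℕ} {S : Finset Ω}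

lemma Witnesses.le_card (hW : Witnesses G k S) : k ≤ Fintype.card Ω :=
  hW.1 ▸ card_le_univ S

/-- Extend `U` to a `(k-1)`-set `T` and take a transversal of the partition of `Ω` into `Tᶜ` and
the singletons of `T`. -/
lemma Witnesses.exists_subset_image_s12 (hW : Witnesses G k S) {U : Finset Ω} (hU : U.card < k) :
    ∃ g ∈ G, U ⊆ S.image g := by
  obtain ⟨T, hUT, -, hT⟩ := exists_subsuperset_card_eq (subset_univ U) (n := k - 1)
    (by omega) (by simpa using (Nat.sub_le k 1).trans hW.le_card)
  have hTc : Tᶜ.Nonempty := by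
    rw [nonempty_iff_ne_empty, Ne, compl_eq_empty_iff]
    rintro rfl
    have := hW.le_card
    simp only [card_univ] at hT
    omega
  obtain ⟨g, hg, htr⟩ := hW.2 _ (isPartition_insert_compl_image_singleton_s12 hTc)
    (by rw [card_insert_compl_image_singleton_s12, hT]; omega)
  refine ⟨g, hg, hUT.trans fun t ht => ?_⟩
  by_contra hgt
  have := htr {t} (mem_insert_of_mem (mem_image_of_mem _ ht))
  rw [inter_singleton_of_notMem hgt] at this
  simp at this

lemma Witnesses.edgesPairwiseIntersect_of_isIndepSet (hW : Witnesses G k S) (hk : 5 ≤ k)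
    {Γ : SimpleGraph Ω} (hΓ : Γ.IsInvariant G) {M : Finset Ω} (hM : M.card + 1 = k)
    (hMΓ : Γ.IsIndepSet M) : Γ.EdgesPairwiseIntersect := by
  obtain ⟨g, hg, hMg⟩ := hW.exists_subset_image_s12 (U := M) (by omega)
  have hU : (S.image g \ M).card ≤ 1 := by
    rw [card_sdiff_of_subset hMg, card_image_of_injective _ g.injective, hW.1]
    omega
  intro x y z w hxy hzw
  obtain ⟨h, hh, hxyzw⟩ :=
    hW.exists_subset_image_s12 (U := {x, y, z, w}) (card_le_four.trans_lt (by omega))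
  have hφ : ∀ p ∈ ({x, y, z, w} : Finset Ω), (g * h⁻¹) p ∈ S.image g := by
    intro p hp
    obtain ⟨s, hs, rfl⟩ := mem_image.mp (hxyzw hp)
    simpa using mem_image_of_mem g hs
  have hφG : g * h⁻¹ ∈ G := mul_mem hg (inv_mem hh)
  have := hMΓ.eq_or_eq_of_adj_of_card_sdiff_le_one hU (hφ x (by simp)) (hφ y (by simp))
    (hφ z (by simp)) (hφ w (by simp)) (hΓ _ hφG hxy) (hΓ _ hφG hzw)
  simpa only [(g * h⁻¹).injective.eq_iff] using this

/-- Let `k ≥ 5` and let `G` be transitive with the `k`-et property on a set whose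
size exceeds the diagonal Ramsey number `R(k-1, k-1)` (expressed by the Ramsey
property for `(k-1)`-sets). Then `G` is `2`-homogeneous. -/
theorem kET_implies_two_homogeneous (G : Subgroup (Equiv.Perm Ω)) (k : ℕ)
    (hk : 5 ≤ k)
    (htrans : ∀ a b : Ω, ∃ g ∈ G, g a = b)
    (hRamsey : ∀ c : Ω → Ω → Bool, (∀ x y, c x y = c y x) →
      ∃ (A : Finset Ω) (b : Bool), A.card = k - 1 ∧
        ∀ x ∈ A, ∀ y ∈ A, x ≠ y → c x y = b)
    (het : ∃ S : Finset Ω, Witnesses G k S) :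
    ∀ A B : Finset Ω, A.card = 2 → B.card = 2 → ∃ g ∈ G, A.image ⇑g = B := by
  classical
  intro A B hA hB
  by_contra! hAB
  obtain ⟨b₁, b₂, hb, rfl⟩ := card_eq_two.mp hB
  obtain ⟨S, hW⟩ := het
  set Γ := SimpleGraph.orbitGraph G A
  have hΓ := SimpleGraph.orbitGraph_isInvariant G A
  obtain ⟨M, b, hM, hmono⟩ :=
    hRamsey (fun x y => decide (Γ.Adj x y)) fun x y => by simp only [Γ.adj_comm]
  obtain ⟨Δ, hΔ, x, y, hxy, hMΔ⟩ : ∃ Δ : SimpleGraph Ω, Δ.IsInvariant G ∧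
      ∃ x y, Δ.Adj x y ∧ Δ.IsIndepSet M := by
    cases b
    · obtain ⟨a₁, a₂, ha, rfl⟩ := card_eq_two.mp hA
      refine ⟨Γ, hΓ, a₁, a₂, SimpleGraph.orbitGraph_adj.mpr ⟨ha, 1, one_mem G, by simp⟩,
        fun x hx y hy hxy => by simpa using hmono x hx y hy hxy⟩
    · refine ⟨Γᶜ, hΓ.compl, b₁, b₂, ⟨hb, fun h => ?_⟩,
        fun x hx y hy hxy h => h.2 (by simpa using hmono x hx y hy hxy)⟩
      obtain ⟨-, g, hg, hgA⟩ := SimpleGraph.orbitGraph_adj.mp h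
      exact hAB g hg hgA
  have hcard : 5 ≤ Nat.card Ω := by
    simpa [Nat.card_eq_fintype_card] using hk.trans hW.le_card
  exact SimpleGraph.not_edgesPairwiseIntersect htrans hΔ hxy hcard
    (hW.edgesPairwiseIntersect_of_isIndepSet hk hΔ (by omega) hMΔ)
end

section
/- Let G be a transitive permutation group that acts as automorphisms of a (nontrivial, G-invariant) graph Γ with clique number ω ≥ 3 and independence number α ≥ 3. If G has the k-et property with k ≥ 5, then k ≥ ω + α - 1. -/
/-!
Partitioning `Ω` into the singletons of a set `C` with `|C| < k` and one further block shows that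
some `G`-image of the witness `S` contains `C`; pulling back, every `G`-invariant configuration on
fewer than `k` points occurs inside `S`. A clique and a coclique share at most one point, so a
`k`-set cannot contain an `l`-clique and an `m`-coclique with `l + m = k + 2`. If `ω + α ≥ k + 2`,
then `l = min ω (k - 1)` and `m = k + 2 - l` are such sizes with `l ≤ ω`, `m ≤ α` and `l, m < k`.
-/

open Finset

variable {Ω : Type*} [Fintype Ω] [DecidableEq Ω]

lemma isPartition_insert_compl_map_singleton {T : Finset Ω} (hT : Tᶜ.Nonempty) :
    IsPartition (insert Tᶜ (T.map ⟨singleton, singleton_injective⟩)) := by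
  refine ⟨?_, ?_, fun x => ?_⟩
  · simp only [forall_mem_insert, mem_map, Function.Embedding.coeFn_mk, forall_exists_index,
      and_imp, forall_apply_eq_imp_iff₂]
    exact ⟨hT, fun x _ => singleton_nonempty x⟩
  · simp only [mem_insert, mem_map, Function.Embedding.coeFn_mk]
    rintro p (rfl | ⟨x, hx, rfl⟩) q (rfl | ⟨y, hy, rfl⟩) hpq
    · exact absurd rfl hpq
    · simpa using hy
    · simpa using hx
    · simpa using fun h : x = y => hpq (h ▸ rfl)
  · by_cases hx : x ∈ T
    · exact ⟨{x}, mem_insert_of_mem (mem_map_of_mem _ hx), mem_singleton_self x⟩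
    · exact ⟨Tᶜ, mem_insert_self _ _, mem_compl.2 hx⟩

lemma card_insert_compl_map_singleton {T : Finset Ω} (hT : Tᶜ.Nonempty) :
    (insert Tᶜ (T.map ⟨singleton, singleton_injective⟩)).card = T.card + 1 := by
  refine (card_insert_of_notMem fun h => ?_).trans (by rw [card_map])
  obtain ⟨x, hx, hxT⟩ := mem_map.1 h
  obtain ⟨y, hy⟩ := hT
  simp only [Function.Embedding.coeFn_mk] at hxT
  rw [← hxT, mem_singleton] at hy
  exact mem_compl.1 (hxT ▸ mem_singleton_self x) hx

lemma exists_isPartition_card_eq_singleton_mem {C : Finset Ω} {k : ℕ} (hCk : C.card < k)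
    (hk : k ≤ Fintype.card Ω) :
    ∃ P : Finset (Finset Ω), IsPartition P ∧ P.card = k ∧ ∀ c ∈ C, {c} ∈ P := by
  obtain ⟨T, hCT, -, hTcard⟩ :=
    exists_subsuperset_card_eq (subset_univ C) (n := k - 1) (by omega) (by simp; omega)
  have hT : Tᶜ.Nonempty := by
    rw [← card_pos, card_compl]
    omega
  refine ⟨_, isPartition_insert_compl_map_singleton hT, ?_, fun c hc => ?_⟩
  · rw [card_insert_compl_map_singleton hT]
    omega
  · exact mem_insert_of_mem (mem_map_of_mem _ (hCT hc))

omit [Fintype Ω] in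
lemma IsTransversal.singleton_subset {S : Finset Ω} {P : Finset (Finset Ω)}
    (hS : IsTransversal S P) {c : Ω} (hc : {c} ∈ P) : {c} ⊆ S := by
  obtain ⟨x, hx⟩ := card_pos.1 (hS _ hc ▸ Nat.one_pos)
  rw [mem_inter, mem_singleton] at hx
  simpa [hx.2] using hx.1

lemma Witnesses.exists_image_subset {G : Subgroup (Equiv.Perm Ω)} {k : ℕ} {S : Finset Ω}
    (hS : Witnesses G k S) {C : Finset Ω} (hCk : C.card < k) :
    ∃ g ∈ G, C.image g ⊆ S := by
  obtain ⟨P, hP, hPk, hCP⟩ :=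
    exists_isPartition_card_eq_singleton_mem hCk (hS.1 ▸ card_le_univ S)
  obtain ⟨g, hg, hgS⟩ := hS.2 P hP hPk
  refine ⟨g⁻¹, inv_mem hg, image_subset_iff.2 fun c hc => ?_⟩
  obtain ⟨x, hx, rfl⟩ := mem_image.1 (singleton_subset_iff.1 (hgS.singleton_subset (hCP c hc)))
  simpa using hx

lemma Witnesses.exists_pairwise_subset {G : Subgroup (Equiv.Perm Ω)} {k : ℕ} {S : Finset Ω}
    (hS : Witnesses G k S) {r : Ω → Ω → Prop} (hr : ∀ g ∈ G, ∀ x y, r (g x) (g y) ↔ r x y)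
    {C : Finset Ω} (hC : (C : Set Ω).Pairwise r) (hCk : C.card < k) :
    ∃ C' ⊆ S, C'.card = C.card ∧ (C' : Set Ω).Pairwise r := by
  obtain ⟨g, hg, hCS⟩ := hS.exists_image_subset hCk
  refine ⟨C.image g, hCS, card_image_of_injective _ g.injective, ?_⟩
  rw [coe_image]
  exact Set.Pairwise.image (hC.imp fun x y => (hr g hg x y).2)

omit [Fintype Ω] in
lemma card_add_card_le_of_isClique_of_isIndepSet {Γ : SimpleGraph Ω} {S A B : Finset Ω}
    (hAS : A ⊆ S) (hBS : B ⊆ S) (hA : Γ.IsClique (A : Set Ω)) (hB : Γ.IsIndepSet (B : Set Ω)) :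
    A.card + B.card ≤ S.card + 1 := by
  have hAB : (A ∩ B).card ≤ 1 := card_le_one.2 fun x hx y hy => by
    rw [mem_inter] at hx hy
    by_contra hxy
    exact hB hx.2 hy.2 hxy (hA hx.1 hy.1 hxy)
  have := card_union_add_card_inter A B
  have := card_le_card (union_subset hAS hBS)
  omega

theorem kET_clique_coclique_bound_general (G : Subgroup (Equiv.Perm Ω))
    (Γ : SimpleGraph Ω)
    (hinv : ∀ g ∈ G, ∀ x y : Ω, Γ.Adj (g x) (g y) ↔ Γ.Adj x y)
    (ω α k : ℕ) (hω : 3 ≤ ω) (hα : 3 ≤ α)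
    (hclique : ∃ C : Finset Ω, C.card = ω ∧
      ∀ x ∈ C, ∀ y ∈ C, x ≠ y → Γ.Adj x y)
    (hindep : ∃ C : Finset Ω, C.card = α ∧
      ∀ x ∈ C, ∀ y ∈ C, x ≠ y → ¬ Γ.Adj x y)
    (hk : 5 ≤ k)
    (het : ∃ S : Finset Ω, Witnesses G k S) :
    ω + α - 1 ≤ k := by
  by_contra! hlt
  obtain ⟨S, hS⟩ := het
  obtain ⟨C, hCω, hC⟩ := hclique
  obtain ⟨D, hDα, hD⟩ := hindep
  set l := min ω (k - 1) with hl
  obtain ⟨C₀, hC₀C, hC₀l⟩ := exists_subset_card_eq (s := C) (n := l) (by omega)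
  obtain ⟨D₀, hD₀D, hD₀m⟩ := exists_subset_card_eq (s := D) (n := k + 2 - l) (by omega)
  obtain ⟨C', hC'S, hC'card, hC'⟩ :=
    hS.exists_pairwise_subset hinv (Set.Pairwise.mono hC₀C hC) (by omega)
  obtain ⟨D', hD'S, hD'card, hD'⟩ :=
    hS.exists_pairwise_subset (fun g hg x y => not_congr (hinv g hg x y))
      (Set.Pairwise.mono hD₀D hD) (by omega)
  have := card_add_card_le_of_isClique_of_isIndepSet hC'S hD'S hC' hD'
  have := hS.1
  omega

/-- If the transitive group `G` acts as automorphisms of a graph `Γ` with clique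
number `ω ≥ 3` and independence number `α ≥ 3`, and `G` has the `k`-et property
with `k ≥ 5`, then `k ≥ ω + α - 1`. -/
theorem kET_clique_coclique_bound (G : Subgroup (Equiv.Perm Ω))
    (htrans : ∀ a b : Ω, ∃ g ∈ G, g a = b)
    (Γ : SimpleGraph Ω)
    (hinv : ∀ g ∈ G, ∀ x y : Ω, Γ.Adj (g x) (g y) ↔ Γ.Adj x y)
    (ω α k : ℕ) (hω : 3 ≤ ω) (hα : 3 ≤ α)
    (hclique : ∃ C : Finset Ω, C.card = ω ∧
      ∀ x ∈ C, ∀ y ∈ C, x ≠ y → Γ.Adj x y)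
    (hcliquemax : ∀ C : Finset Ω, (∀ x ∈ C, ∀ y ∈ C, x ≠ y → Γ.Adj x y) →
      C.card ≤ ω)
    (hindep : ∃ C : Finset Ω, C.card = α ∧
      ∀ x ∈ C, ∀ y ∈ C, x ≠ y → ¬ Γ.Adj x y)
    (hindepmax : ∀ C : Finset Ω, (∀ x ∈ C, ∀ y ∈ C, x ≠ y → ¬ Γ.Adj x y) →
      C.card ≤ α)
    (hk : 5 ≤ k)
    (het : ∃ S : Finset Ω, Witnesses G k S) :
    ω + α - 1 ≤ k :=
  kET_clique_coclique_bound_general G Γ hinv ω α k hω hα hclique hindep hk het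
end

section
/- Let A and B be two complementary fixed sets of a permutation group G on Ω, with |A| = a ≥ 2, |B| = b ≥ 2, a + b = n, and 3 ≤ k ≤ n - 1. Then min(k-1, a) + min(k-1, b) ≥ k + 1. Consequently, a group with two orbits each of size at least 2 does not have the k-et property for 2 < k < n. -/
open Finset

variable {Ω : Type*} [Fintype Ω] [DecidableEq Ω]

lemma exists_split (A : Finset Ω) (m : ℕ) (hm1 : 1 ≤ m) (hm2 : m ≤ A.card) :
    ∃ Q : Finset (Finset Ω), Q.card = m ∧ (∀ q ∈ Q, q.Nonempty) ∧ (∀ q ∈ Q, q ⊆ A) ∧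
    (∀ p ∈ Q, ∀ q ∈ Q, p ≠ q → Disjoint p q) ∧ (∀ x ∈ A, ∃ q ∈ Q, x ∈ q) := by
  obtain ⟨T, hTA, hT⟩ := Finset.exists_subset_card_eq (s := A) (n := m - 1) (by omega)
  refine ⟨insert (A \ T) (T.image fun x => ({x} : Finset Ω)), ?_, ?_, ?_, ?_, ?_⟩
  · have hnotmem : A \ T ∉ T.image fun x => ({x} : Finset Ω) := by
      intro h
      simp only [mem_image] at h
      obtain ⟨x, hx, hxe⟩ := h
      have : x ∈ A \ T := hxe ▸ mem_singleton_self x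
      exact (mem_sdiff.1 this).2 hx
    rw [card_insert_of_notMem hnotmem, card_image_of_injective _ (fun x y h => by
      simpa using h), hT]
    omega
  · intro q hq
    rcases mem_insert.1 hq with h | h
    · subst h
      rw [← card_pos, card_sdiff_of_subset hTA, hT]; omega
    · simp only [mem_image] at h
      obtain ⟨x, _, rfl⟩ := h
      exact ⟨x, mem_singleton_self x⟩
  · intro q hq
    rcases mem_insert.1 hq with h | h
    · subst h; exact sdiff_subset
    · simp only [mem_image] at h
      obtain ⟨x, hx, rfl⟩ := h
      exact singleton_subset_iff.2 (hTA hx)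
  · intro p hp q hq hpq
    rcases mem_insert.1 hp with h1 | h1 <;> rcases mem_insert.1 hq with h2 | h2
    · exact absurd (h1.trans h2.symm) hpq
    · subst h1
      simp only [mem_image] at h2
      obtain ⟨x, hx, rfl⟩ := h2
      simp [Finset.disjoint_singleton_right, hx]
    · subst h2
      simp only [mem_image] at h1
      obtain ⟨x, hx, rfl⟩ := h1
      simp [Finset.disjoint_singleton_left, hx]
    · simp only [mem_image] at h1 h2
      obtain ⟨x, hx, rfl⟩ := h1
      obtain ⟨y, hy, rfl⟩ := h2
      simp only [Finset.disjoint_singleton_left, mem_singleton]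
      intro h; exact hpq (by rw [h])
  · intro x hx
    by_cases hxT : x ∈ T
    · exact ⟨{x}, mem_insert_of_mem (mem_image_of_mem _ hxT), mem_singleton_self x⟩
    · exact ⟨A \ T, mem_insert_self _ _, mem_sdiff.2 ⟨hx, hxT⟩⟩

lemma card_inter_eq (S' : Finset Ω) (A : Finset Ω) (Q : Finset (Finset Ω))
    (hsub : ∀ q ∈ Q, q ⊆ A)
    (hdis : ∀ p ∈ Q, ∀ q ∈ Q, p ≠ q → Disjoint p q)
    (hcov : ∀ x ∈ A, ∃ q ∈ Q, x ∈ q)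
    (htr : ∀ q ∈ Q, (S' ∩ q).card = 1) :
    (S' ∩ A).card = Q.card := by
  have heq : S' ∩ A = Q.biUnion (fun q => S' ∩ q) := by
    ext x
    simp only [mem_inter, mem_biUnion]
    constructor
    · rintro ⟨hxS, hxA⟩
      obtain ⟨q, hq, hxq⟩ := hcov x hxA
      exact ⟨q, hq, hxS, hxq⟩
    · rintro ⟨q, hq, hxS, hxq⟩
      exact ⟨hxS, hsub q hq hxq⟩
  rw [heq, Finset.card_biUnion (fun p hp q hq hpq =>
    Finset.disjoint_of_subset_left inter_subset_right
      (Finset.disjoint_of_subset_right inter_subset_right (hdis p hp q hq hpq)))]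
  rw [Finset.sum_congr rfl htr, Finset.sum_const, smul_eq_mul, mul_one]

/-- If `G` has two complementary fixed (invariant) sets `A`, `B` with
`|A| = a ≥ 2`, `|B| = b ≥ 2` and `3 ≤ k ≤ n - 1`, then
`min(k-1,a) + min(k-1,b) ≥ k + 1`; consequently `G` does not have the `k`-et
property. -/
theorem no_kET_two_large_orbits (G : Subgroup (Equiv.Perm Ω))
    (A B : Finset Ω) (a b k : ℕ)
    (hA : A.card = a) (hB : B.card = b)
    (ha : 2 ≤ a) (hb : 2 ≤ b)
    (hdisj : Disjoint A B) (huniv : A ∪ B = Finset.univ)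
    (hfixA : ∀ g ∈ G, ∀ x ∈ A, g x ∈ A)
    (hfixB : ∀ g ∈ G, ∀ x ∈ B, g x ∈ B)
    (hk1 : 3 ≤ k) (hk2 : k < Fintype.card Ω) :
    k + 1 ≤ min (k - 1) a + min (k - 1) b ∧
    ¬ ∃ S : Finset Ω, Witnesses G k S := by
  have hn : a + b = Fintype.card Ω := by
    rw [← hA, ← hB, ← Finset.card_union_of_disjoint hdisj, huniv, Finset.card_univ]
  have hpart1 : k + 1 ≤ min (k - 1) a + min (k - 1) b := by omega
  refine ⟨hpart1, ?_⟩
  rintro ⟨S, hSk, hS⟩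
  -- choose p
  set s := (S ∩ A).card with hs
  have hSA : S ∩ A ∪ S ∩ B = S := by
    rw [← Finset.inter_union_distrib_left, huniv, Finset.inter_univ]
  have hSAB : Disjoint (S ∩ A) (S ∩ B) :=
    Finset.disjoint_of_subset_left inter_subset_right
      (Finset.disjoint_of_subset_right inter_subset_right hdisj)
  have hsum : s + (S ∩ B).card = k := by
    rw [hs, ← Finset.card_union_of_disjoint hSAB, hSA, hSk]
  have hsa : s ≤ a := hA ▸ Finset.card_le_card inter_subset_right
  set lo := max 1 (k - b) with hlo
  set hi := min a (k - 1) with hhi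
  have hrange : lo + 1 ≤ hi := by omega
  set p := if s = lo then lo + 1 else lo with hp
  have hps : p ≠ s := by
    rcases eq_or_ne s lo with h | h <;> simp [hp, h] <;> omega
  have hp1 : 1 ≤ p := by rcases eq_or_ne s lo with h | h <;> simp [hp, h] <;> omega
  have hpa : p ≤ a := by
    rcases eq_or_ne s lo with h | h <;> simp [hp, h] <;> omega
  have hpk : p ≤ k - 1 := by
    rcases eq_or_ne s lo with h | h <;> simp [hp, h] <;> omega
  have hqb : k - p ≤ b := by
    rcases eq_or_ne s lo with h | h <;> simp [hp, h] <;> omega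
  have hq1 : 1 ≤ k - p := by omega
  -- build partition
  obtain ⟨QA, hQAcard, hQAne, hQAsub, hQAdis, hQAcov⟩ := exists_split A p hp1 (by omega)
  obtain ⟨QB, hQBcard, hQBne, hQBsub, hQBdis, hQBcov⟩ := exists_split B (k - p) hq1 (by omega)
  have hQAB : Disjoint QA QB := by
    rw [Finset.disjoint_left]
    intro q hqA hqB
    obtain ⟨x, hx⟩ := hQAne q hqA
    exact Finset.disjoint_left.1 hdisj (hQAsub q hqA hx) (hQBsub q hqB hx)
  set P := QA ∪ QB with hP
  have hPcard : P.card = k := by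
    rw [hP, Finset.card_union_of_disjoint hQAB, hQAcard, hQBcard]; omega
  have hPpart : IsPartition P := by
    refine ⟨?_, ?_, ?_⟩
    · intro q hq
      rcases Finset.mem_union.1 hq with h | h
      · exact hQAne q h
      · exact hQBne q h
    · intro q1 h1 q2 h2 hne
      rcases Finset.mem_union.1 h1 with h1 | h1 <;> rcases Finset.mem_union.1 h2 with h2 | h2
      · exact hQAdis q1 h1 q2 h2 hne
      · exact Finset.disjoint_of_subset_left (hQAsub q1 h1)
          (Finset.disjoint_of_subset_right (hQBsub q2 h2) hdisj)
      · exact Finset.disjoint_of_subset_left (hQBsub q1 h1)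
          (Finset.disjoint_of_subset_right (hQAsub q2 h2) hdisj.symm)
      · exact hQBdis q1 h1 q2 h2 hne
    · intro x
      have hx : x ∈ A ∪ B := huniv ▸ Finset.mem_univ x
      rcases Finset.mem_union.1 hx with h | h
      · obtain ⟨q, hq, hxq⟩ := hQAcov x h
        exact ⟨q, Finset.mem_union_left _ hq, hxq⟩
      · obtain ⟨q, hq, hxq⟩ := hQBcov x h
        exact ⟨q, Finset.mem_union_right _ hq, hxq⟩
  obtain ⟨g, hg, htr⟩ := hS P hPpart hPcard
  -- g fixes A setwise
  have hgA : A.image ⇑g = A := by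
    apply Finset.eq_of_subset_of_card_le
    · intro x hx
      obtain ⟨y, hy, rfl⟩ := Finset.mem_image.1 hx
      exact hfixA g hg y hy
    · rw [Finset.card_image_of_injective _ g.injective]
  have hSgA : (S.image ⇑g ∩ A).card = s := by
    rw [← hgA, ← Finset.image_inter _ _ g.injective,
      Finset.card_image_of_injective _ g.injective]
  have : (S.image ⇑g ∩ A).card = QA.card :=
    card_inter_eq _ _ _ hQAsub hQAdis hQAcov
      (fun q hq => htr q (Finset.mem_union_left _ hq))
  rw [hSgA, hQAcard] at this
  exact hps (this ▸ rfl)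
end
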